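/- arXiv:1207.4647 — 5 statements merged into one kernel-verified Lean document; each statement's English description precedes it below -/
import Mathlib

section
/- Let W : ℝ → ℝ be smooth, γ, μ ∈ ℝ, and let U ⊆ ℝᵈ × ℝ be open. Suppose ρ : U → ℝ and v : U → ℝᵈ are smooth and satisfy the NSK system pointwise on U. Define the energy density e := W(ρ) + ½ ρ ‖v‖² + (γ/2) ‖∇ρ‖² and the flux F := ρ (W'(ρ) + ½‖v‖²) v − γ ρ (Δρ) v − γ (∂ₜρ) ∇ρ − μ (Dv)ᵀ v, where Dv is the spatial Jacobian matrix (Dv)ᵢⱼ = ∂vᵢ/∂xⱼ and ∇, Δ, div are taken in the spatial variables. Then the local energy balance ∂ₜe + div F + μ‖Dv‖_F² = 0 holds at every point of U, where ‖·‖_F is the Frobenius norm. -/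
open Set

/-- The pressure associated to a potential `W` via `p(r) = r W'(r) - W(r)`. -/
noncomputable def press (W : ℝ → ℝ) (r : ℝ) : ℝ := r * deriv W r - W r

/-- Spatial partial derivative in the `i`-th coordinate direction of a function
of space `x : Fin d → ℝ` and time `t : ℝ`. -/
noncomputable def pdx {d : ℕ} (i : Fin d) (f : (Fin d → ℝ) → ℝ → ℝ)
    (x : Fin d → ℝ) (t : ℝ) : ℝ :=
  deriv (fun s => f (Function.update x i s) t) (x i)

/-- Time partial derivative of a function of space and time. -/
noncomputable def pdt {d : ℕ} (f : (Fin d → ℝ) → ℝ → ℝ)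
    (x : Fin d → ℝ) (t : ℝ) : ℝ :=
  deriv (f x) t

/-- Spatial Laplacian of a function of space and time. -/
noncomputable def lap {d : ℕ} (f : (Fin d → ℝ) → ℝ → ℝ)
    (x : Fin d → ℝ) (t : ℝ) : ℝ :=
  ∑ i, pdx i (pdx i f) x t

section NSKAux

open Filter
open scoped ContDiff

variable {d : ℕ} {x : Fin d → ℝ} {t : ℝ}

private lemma line_hasDerivAt (x : Fin d → ℝ) (t : ℝ) (i : Fin d) :
    HasDerivAt (fun s : ℝ => ((Function.update x i s : Fin d → ℝ), t))
      ((Pi.single i 1 : Fin d → ℝ), (0 : ℝ)) (x i) := by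
  have h1 : (fun s : ℝ => (Function.update x i s : Fin d → ℝ))
      = fun s => x + (s - x i) • (Pi.single i 1 : Fin d → ℝ) := by
    funext s
    funext j
    rcases eq_or_ne j i with h | h
    · subst h
      simp
    · simp [Function.update_of_ne h, Pi.single_eq_of_ne h]
  have h2 : HasDerivAt (fun s : ℝ => x + (s - x i) • (Pi.single i 1 : Fin d → ℝ))
      (Pi.single i 1 : Fin d → ℝ) (x i) := by
    have h3 := (((hasDerivAt_id (x i)).sub_const (x i)).smul_const
      (Pi.single i 1 : Fin d → ℝ)).const_add x
    simpa using h3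
  have h2' : HasDerivAt (fun s : ℝ => (Function.update x i s : Fin d → ℝ))
      (Pi.single i 1 : Fin d → ℝ) (x i) := by
    rw [h1]; exact h2
  exact h2'.prodMk (hasDerivAt_const (x i) t)

private lemma pdx_fderiv (f : (Fin d → ℝ) → ℝ → ℝ) (i : Fin d)
    (hf : DifferentiableAt ℝ (fun w : (Fin d → ℝ) × ℝ => f w.1 w.2) (x, t)) :
    pdx i f x t
      = fderiv ℝ (fun w : (Fin d → ℝ) × ℝ => f w.1 w.2) (x, t) (Pi.single i 1, 0) := by
  have hF : HasFDerivAt (fun w : (Fin d → ℝ) × ℝ => f w.1 w.2)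
      (fderiv ℝ (fun w : (Fin d → ℝ) × ℝ => f w.1 w.2) (x, t))
      (Function.update x i (x i), t) := by
    rw [Function.update_eq_self]
    exact hf.hasFDerivAt
  exact (hF.comp_hasDerivAt (x i) (line_hasDerivAt x t i)).deriv

private lemma pdx_hasDerivAt (f : (Fin d → ℝ) → ℝ → ℝ) (i : Fin d)
    (hf : DifferentiableAt ℝ (fun w : (Fin d → ℝ) × ℝ => f w.1 w.2) (x, t)) :
    HasDerivAt (fun s => f (Function.update x i s) t) (pdx i f x t) (x i) := by
  rw [pdx_fderiv f i hf]
  have hF : HasFDerivAt (fun w : (Fin d → ℝ) × ℝ => f w.1 w.2)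
      (fderiv ℝ (fun w : (Fin d → ℝ) × ℝ => f w.1 w.2) (x, t))
      (Function.update x i (x i), t) := by
    rw [Function.update_eq_self]
    exact hf.hasFDerivAt
  exact hF.comp_hasDerivAt (x i) (line_hasDerivAt x t i)

private lemma pdt_fderiv (f : (Fin d → ℝ) → ℝ → ℝ)
    (hf : DifferentiableAt ℝ (fun w : (Fin d → ℝ) × ℝ => f w.1 w.2) (x, t)) :
    pdt f x t = fderiv ℝ (fun w : (Fin d → ℝ) × ℝ => f w.1 w.2) (x, t) (0, 1) := by
  have hL : HasDerivAt (fun s : ℝ => ((x, s) : (Fin d → ℝ) × ℝ)) (0, 1) t :=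
    (hasDerivAt_const t x).prodMk (hasDerivAt_id t)
  exact (hf.hasFDerivAt.comp_hasDerivAt t hL).deriv

private lemma pdt_hasDerivAt (f : (Fin d → ℝ) → ℝ → ℝ)
    (hf : DifferentiableAt ℝ (fun w : (Fin d → ℝ) × ℝ => f w.1 w.2) (x, t)) :
    HasDerivAt (fun s => f x s) (pdt f x t) t := by
  rw [pdt_fderiv f hf]
  exact hf.hasFDerivAt.comp_hasDerivAt t ((hasDerivAt_const t x).prodMk (hasDerivAt_id t))

private lemma pdx_comp (f : (Fin d → ℝ) → ℝ → ℝ) (i : Fin d)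
    (hf : DifferentiableAt ℝ (fun w : (Fin d → ℝ) × ℝ => f w.1 w.2) (x, t))
    {φ : ℝ → ℝ} {c : ℝ} (hφ : HasDerivAt φ c (f x t)) :
    pdx i (fun y s => φ (f y s)) x t = c * pdx i f x t := by
  have h := pdx_hasDerivAt f i hf
  have hφ' : HasDerivAt φ c (f (Function.update x i (x i)) t) := by
    rwa [Function.update_eq_self]
  exact (hφ'.comp (x i) h).deriv

variable {U : Set ((Fin d → ℝ) × ℝ)}

private lemma aux_diffOn (hU : IsOpen U) (f : (Fin d → ℝ) → ℝ → ℝ)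
    (hf : ContDiffOn ℝ (⊤ : ℕ∞) (fun w : (Fin d → ℝ) × ℝ => f w.1 w.2) U) :
    ∀ w ∈ U, DifferentiableAt ℝ (fun w : (Fin d → ℝ) × ℝ => f w.1 w.2) w :=
  fun w hw => (hf.contDiffAt (hU.mem_nhds hw)).differentiableAt (by simp)

private lemma aux_cd_fderiv (hU : IsOpen U) (f : (Fin d → ℝ) → ℝ → ℝ)
    (hf : ContDiffOn ℝ (⊤ : ℕ∞) (fun w : (Fin d → ℝ) × ℝ => f w.1 w.2) U)
    (hz : (x, t) ∈ U) :
    ContDiffAt ℝ (⊤ : ℕ∞) (fderiv ℝ (fun w : (Fin d → ℝ) × ℝ => f w.1 w.2)) (x, t) :=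
  (hf.contDiffAt (hU.mem_nhds hz)).fderiv_right (by simp)

private lemma aux_ev_pdx (hU : IsOpen U) (f : (Fin d → ℝ) → ℝ → ℝ)
    (hf : ContDiffOn ℝ (⊤ : ℕ∞) (fun w : (Fin d → ℝ) × ℝ => f w.1 w.2) U)
    (hz : (x, t) ∈ U) (i : Fin d) :
    (fun w : (Fin d → ℝ) × ℝ => pdx i f w.1 w.2) =ᶠ[nhds (x, t)]
      fun w => fderiv ℝ (fun w : (Fin d → ℝ) × ℝ => f w.1 w.2) w (Pi.single i 1, 0) := by
  filter_upwards [hU.mem_nhds hz] with w hw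
  exact pdx_fderiv f i (aux_diffOn hU f hf w hw)

private lemma aux_ev_pdt (hU : IsOpen U) (f : (Fin d → ℝ) → ℝ → ℝ)
    (hf : ContDiffOn ℝ (⊤ : ℕ∞) (fun w : (Fin d → ℝ) × ℝ => f w.1 w.2) U)
    (hz : (x, t) ∈ U) :
    (fun w : (Fin d → ℝ) × ℝ => pdt f w.1 w.2) =ᶠ[nhds (x, t)]
      fun w => fderiv ℝ (fun w : (Fin d → ℝ) × ℝ => f w.1 w.2) w (0, 1) := by
  filter_upwards [hU.mem_nhds hz] with w hw
  exact pdt_fderiv f (aux_diffOn hU f hf w hw)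

private lemma aux_diff_pdx (hU : IsOpen U) (f : (Fin d → ℝ) → ℝ → ℝ)
    (hf : ContDiffOn ℝ (⊤ : ℕ∞) (fun w : (Fin d → ℝ) × ℝ => f w.1 w.2) U)
    (hz : (x, t) ∈ U) (i : Fin d) :
    DifferentiableAt ℝ (fun w : (Fin d → ℝ) × ℝ => pdx i f w.1 w.2) (x, t) := by
  have h1 : DifferentiableAt ℝ
      (fun w => fderiv ℝ (fun w : (Fin d → ℝ) × ℝ => f w.1 w.2) w (Pi.single i 1, 0)) (x, t) :=
    ((aux_cd_fderiv hU f hf hz).differentiableAt (by simp)).clm_apply (differentiableAt_const _)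
  exact h1.congr_of_eventuallyEq (aux_ev_pdx hU f hf hz i)

private lemma aux_diff_pdt (hU : IsOpen U) (f : (Fin d → ℝ) → ℝ → ℝ)
    (hf : ContDiffOn ℝ (⊤ : ℕ∞) (fun w : (Fin d → ℝ) × ℝ => f w.1 w.2) U)
    (hz : (x, t) ∈ U) :
    DifferentiableAt ℝ (fun w : (Fin d → ℝ) × ℝ => pdt f w.1 w.2) (x, t) := by
  have h1 : DifferentiableAt ℝ
      (fun w => fderiv ℝ (fun w : (Fin d → ℝ) × ℝ => f w.1 w.2) w (0, 1)) (x, t) :=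
    ((aux_cd_fderiv hU f hf hz).differentiableAt (by simp)).clm_apply (differentiableAt_const _)
  exact h1.congr_of_eventuallyEq (aux_ev_pdt hU f hf hz)

private lemma fderiv_apply_const {G : Type*} [NormedAddCommGroup G] [NormedSpace ℝ G]
    {c : G → (G →L[ℝ] ℝ)} {p : G} (hc : DifferentiableAt ℝ c p) (w v : G) :
    fderiv ℝ (fun y => c y w) p v = fderiv ℝ c p v w := by
  rw [fderiv_clm_apply hc (differentiableAt_const w)]
  simp

private lemma aux_pdx_pdx (hU : IsOpen U) (f : (Fin d → ℝ) → ℝ → ℝ)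
    (hf : ContDiffOn ℝ (⊤ : ℕ∞) (fun w : (Fin d → ℝ) × ℝ => f w.1 w.2) U)
    (hz : (x, t) ∈ U) (i : Fin d) :
    pdx i (pdx i f) x t
      = fderiv ℝ (fderiv ℝ (fun w : (Fin d → ℝ) × ℝ => f w.1 w.2)) (x, t)
          (Pi.single i 1, 0) (Pi.single i 1, 0) := by
  calc pdx i (pdx i f) x t
      = fderiv ℝ (fun w : (Fin d → ℝ) × ℝ => pdx i f w.1 w.2) (x, t) (Pi.single i 1, 0) :=
        pdx_fderiv _ i (aux_diff_pdx hU f hf hz i)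
    _ = fderiv ℝ (fun w => fderiv ℝ (fun w : (Fin d → ℝ) × ℝ => f w.1 w.2) w (Pi.single i 1, 0))
          (x, t) (Pi.single i 1, 0) := by
        rw [(aux_ev_pdx hU f hf hz i).fderiv_eq]
    _ = fderiv ℝ (fderiv ℝ (fun w : (Fin d → ℝ) × ℝ => f w.1 w.2)) (x, t)
          (Pi.single i 1, 0) (Pi.single i 1, 0) :=
        fderiv_apply_const ((aux_cd_fderiv hU f hf hz).differentiableAt (by simp)) _ _

private lemma aux_clairaut (hU : IsOpen U) (f : (Fin d → ℝ) → ℝ → ℝ)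
    (hf : ContDiffOn ℝ (⊤ : ℕ∞) (fun w : (Fin d → ℝ) × ℝ => f w.1 w.2) U)
    (hz : (x, t) ∈ U) (i : Fin d) :
    pdt (pdx i f) x t = pdx i (pdt f) x t := by
  have hsymm : IsSymmSndFDerivAt ℝ (fun w : (Fin d → ℝ) × ℝ => f w.1 w.2) (x, t) :=
    (hf.contDiffAt (hU.mem_nhds hz)).isSymmSndFDerivAt (by simp only [minSmoothness_of_isRCLikeNormedField]; exact WithTop.coe_le_coe.mpr le_top)
  have h1 : pdt (pdx i f) x t
      = fderiv ℝ (fderiv ℝ (fun w : (Fin d → ℝ) × ℝ => f w.1 w.2)) (x, t)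
          (0, 1) (Pi.single i 1, 0) := by
    calc pdt (pdx i f) x t
        = fderiv ℝ (fun w : (Fin d → ℝ) × ℝ => pdx i f w.1 w.2) (x, t) (0, 1) :=
          pdt_fderiv _ (aux_diff_pdx hU f hf hz i)
      _ = fderiv ℝ (fun w => fderiv ℝ (fun w : (Fin d → ℝ) × ℝ => f w.1 w.2) w (Pi.single i 1, 0))
            (x, t) (0, 1) := by
          rw [(aux_ev_pdx hU f hf hz i).fderiv_eq]
      _ = _ := fderiv_apply_const ((aux_cd_fderiv hU f hf hz).differentiableAt (by simp)) _ _
  have h2 : pdx i (pdt f) x t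
      = fderiv ℝ (fderiv ℝ (fun w : (Fin d → ℝ) × ℝ => f w.1 w.2)) (x, t)
          (Pi.single i 1, 0) (0, 1) := by
    calc pdx i (pdt f) x t
        = fderiv ℝ (fun w : (Fin d → ℝ) × ℝ => pdt f w.1 w.2) (x, t) (Pi.single i 1, 0) :=
          pdx_fderiv _ i (aux_diff_pdt hU f hf hz)
      _ = fderiv ℝ (fun w => fderiv ℝ (fun w : (Fin d → ℝ) × ℝ => f w.1 w.2) w (0, 1))
            (x, t) (Pi.single i 1, 0) := by
          rw [(aux_ev_pdt hU f hf hz).fderiv_eq]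
      _ = _ := fderiv_apply_const ((aux_cd_fderiv hU f hf hz).differentiableAt (by simp)) _ _
  rw [h1, h2]
  exact hsymm _ _

private lemma aux_diff_lap (hU : IsOpen U) (f : (Fin d → ℝ) → ℝ → ℝ)
    (hf : ContDiffOn ℝ (⊤ : ℕ∞) (fun w : (Fin d → ℝ) × ℝ => f w.1 w.2) U)
    (hz : (x, t) ∈ U) :
    DifferentiableAt ℝ (fun w : (Fin d → ℝ) × ℝ => lap f w.1 w.2) (x, t) := by
  have hev : (fun w : (Fin d → ℝ) × ℝ => lap f w.1 w.2) =ᶠ[nhds (x, t)]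
      fun w => ∑ i, fderiv ℝ (fderiv ℝ (fun w : (Fin d → ℝ) × ℝ => f w.1 w.2)) w
        (Pi.single i 1, 0) (Pi.single i 1, 0) := by
    filter_upwards [hU.mem_nhds hz] with w hw
    simp only [lap]
    exact Finset.sum_congr rfl fun i _ => aux_pdx_pdx hU f hf hw i
  have hd : DifferentiableAt ℝ
      (fun w => ∑ i, fderiv ℝ (fderiv ℝ (fun w : (Fin d → ℝ) × ℝ => f w.1 w.2)) w
        (Pi.single i 1, 0) (Pi.single i 1, 0)) (x, t) := by
    apply DifferentiableAt.fun_sum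
    intro i _
    have h2 : ContDiffAt ℝ (⊤ : ℕ∞)
        (fderiv ℝ (fderiv ℝ (fun w : (Fin d → ℝ) × ℝ => f w.1 w.2))) (x, t) :=
      (aux_cd_fderiv hU f hf hz).fderiv_right (by simp)
    exact ((h2.differentiableAt (by simp)).clm_apply (differentiableAt_const _)).clm_apply
      (differentiableAt_const _)
  exact hd.congr_of_eventuallyEq hev

private lemma final_algebra (d : ℕ) (γ μ A B r rt Δ : ℝ)
    (ri V Vt pt ct L S aW : Fin d → ℝ) (DV DD : Fin d → Fin d → ℝ)
    (hΔ : Δ = ∑ i, S i)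
    (hct : ∀ l, pt l = ct l)
    (haW : ∀ i, aW i = B * ri i)
    (hM : rt + ∑ i, (ri i * V i + r * DV i i) = 0)
    (hP : ∀ j, rt * V j + r * Vt j
        + (∑ i, ((ri i * V i + r * DV i i) * V j + r * V i * DV j i))
        + r * B * ri j
        = μ * (∑ i, DD j i) + γ * r * L j) :
    A * rt + (1/2 * rt * (∑ l, V l ^ 2) + 1/2 * r * ∑ l, 2 * V l * Vt l)
      + γ/2 * ∑ l, 2 * ri l * pt l
    + (∑ i,
        ((ri i * (A + 1/2 * ∑ l, V l ^ 2) + r * (aW i + 1/2 * ∑ l, 2 * V l * DV l i)) * V i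
            + r * (A + 1/2 * ∑ l, V l ^ 2) * DV i i
          - ((γ * ri i * Δ + γ * r * L i) * V i + γ * r * Δ * DV i i)
          - (γ * ct i * ri i + γ * rt * S i)
          - μ * ∑ l, (DD l i * V l + DV l i * DV l i)))
    + μ * ∑ i, ∑ j, DV i j ^ 2 = 0 := by
  simp only [hct, haW]
  have e3 : ∑ l, 2 * V l * Vt l = 2 * ∑ l, V l * Vt l := by
    rw [Finset.mul_sum]; exact Finset.sum_congr rfl fun l _ => by ring
  have e4 : ∑ l, 2 * ri l * ct l = 2 * ∑ l, ri l * ct l := by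
    rw [Finset.mul_sum]; exact Finset.sum_congr rfl fun l _ => by ring
  have e5 : ∀ i, ∑ l, 2 * V l * DV l i = 2 * ∑ l, V l * DV l i := fun i => by
    rw [Finset.mul_sum]; exact Finset.sum_congr rfl fun l _ => by ring
  have key : ∀ i,
      (ri i * (A + 1/2 * ∑ l, V l ^ 2) + r * (B * ri i + 1/2 * ∑ l, 2 * V l * DV l i)) * V i
        + r * (A + 1/2 * ∑ l, V l ^ 2) * DV i i
        - ((γ * ri i * Δ + γ * r * L i) * V i + γ * r * Δ * DV i i)
        - (γ * ct i * ri i + γ * rt * S i)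
        - μ * ∑ l, (DD l i * V l + DV l i * DV l i)
      = (A + 1/2 * ∑ l, V l ^ 2) * (ri i * V i)
        + (r * B) * (ri i * V i)
        + r * ((∑ l, V l * DV l i) * V i)
        + (r * (A + 1/2 * ∑ l, V l ^ 2)) * DV i i
        - (γ * Δ) * (ri i * V i)
        - (γ * r) * (L i * V i)
        - (γ * r * Δ) * DV i i
        - γ * (ri i * ct i)
        - (γ * rt) * S i
        - μ * (∑ l, DD l i * V l)
        - μ * (∑ l, DV l i * DV l i) := fun i => by
    rw [e5 i, Finset.sum_add_distrib]; ring
  rw [Finset.sum_congr rfl fun i _ => key i, e3, e4]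
  simp only [Finset.sum_add_distrib, Finset.sum_sub_distrib, ← Finset.mul_sum]
  -- momentum, weighted by velocity and summed
  have hPL : ∀ j, ∑ i, ((ri i * V i + r * DV i i) * V j + r * V i * DV j i)
      = (∑ i, ri i * V i) * V j + r * (∑ i, DV i i) * V j + r * ∑ i, V i * DV j i := fun j => by
    rw [Finset.sum_add_distrib]
    congr 1
    · rw [← Finset.sum_mul, Finset.sum_add_distrib, ← Finset.mul_sum, add_mul, mul_assoc]
    · rw [Finset.mul_sum]; exact Finset.sum_congr rfl fun i _ => by ring
  have hP2 : ∀ j, V j * (rt * V j + r * Vt j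
        + ((∑ i, ri i * V i) * V j + r * (∑ i, DV i i) * V j + r * ∑ i, V i * DV j i)
        + r * B * ri j)
      = V j * (μ * (∑ i, DD j i) + γ * r * L j) := fun j => by
    rw [← hPL j]; rw [hP j]
  have hPsum := Finset.sum_congr rfl fun j (_ : j ∈ Finset.univ) => hP2 j
  have hPL2 : ∑ j, V j * (rt * V j + r * Vt j
        + ((∑ i, ri i * V i) * V j + r * (∑ i, DV i i) * V j + r * ∑ i, V i * DV j i)
        + r * B * ri j)
      = rt * ∑ j, V j ^ 2 + r * ∑ j, V j * Vt j
        + ((∑ i, ri i * V i) * ∑ j, V j ^ 2 + r * (∑ i, DV i i) * ∑ j, V j ^ 2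
            + r * ∑ j, V j * ∑ i, V i * DV j i)
        + r * B * ∑ j, ri j * V j := by
    have hb : ∀ j, V j * (rt * V j + r * Vt j
          + ((∑ i, ri i * V i) * V j + r * (∑ i, DV i i) * V j + r * ∑ i, V i * DV j i)
          + r * B * ri j)
        = rt * V j ^ 2 + r * (V j * Vt j)
          + ((∑ i, ri i * V i) * V j ^ 2 + (r * (∑ i, DV i i)) * V j ^ 2
              + r * (V j * ∑ i, V i * DV j i))
          + (r * B) * (ri j * V j) := fun j => by ring
    rw [Finset.sum_congr rfl fun j _ => hb j]
    simp only [Finset.sum_add_distrib, ← Finset.mul_sum]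
  have hPR2 : ∑ j, V j * (μ * (∑ i, DD j i) + γ * r * L j)
      = μ * ∑ j, V j * ∑ i, DD j i + γ * r * ∑ j, L j * V j := by
    have hb : ∀ j, V j * (μ * (∑ i, DD j i) + γ * r * L j)
        = μ * (V j * ∑ i, DD j i) + (γ * r) * (L j * V j) := fun j => by ring
    rw [Finset.sum_congr rfl fun j _ => hb j]
    simp only [Finset.sum_add_distrib, ← Finset.mul_sum]
  rw [hPL2, hPR2] at hPsum
  -- commute double sums
  have hcomm1 : ∑ i, (∑ l, V l * DV l i) * V i = ∑ j, V j * ∑ i, V i * DV j i := by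
    calc ∑ i, (∑ l, V l * DV l i) * V i = ∑ i, ∑ l, V l * DV l i * V i :=
          Finset.sum_congr rfl fun i _ => Finset.sum_mul _ _ _
      _ = ∑ l, ∑ i, V l * DV l i * V i := Finset.sum_comm
      _ = ∑ j, V j * ∑ i, V i * DV j i := Finset.sum_congr rfl fun l _ => by
          rw [Finset.mul_sum]; exact Finset.sum_congr rfl fun i _ => by ring
  have hcomm2 : ∑ i, ∑ l, DD l i * V l = ∑ j, V j * ∑ i, DD j i := by
    rw [Finset.sum_comm]
    exact Finset.sum_congr rfl fun l _ => by
      rw [Finset.mul_sum]; exact Finset.sum_congr rfl fun i _ => by ring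
  have hcomm3 : ∑ i, ∑ j, DV i j ^ 2 = ∑ i, ∑ l, DV l i * DV l i := by
    rw [Finset.sum_comm]
    exact Finset.sum_congr rfl fun _ _ => Finset.sum_congr rfl fun _ _ => pow_two _
  rw [hcomm1, hcomm2, hcomm3]
  -- transform mass equation
  rw [Finset.sum_add_distrib, ← Finset.mul_sum] at hM
  linear_combination (A - 1/2 * (∑ l, V l ^ 2) - γ * Δ) * hM + hPsum + γ * rt * hΔ

end NSKAux

open scoped ContDiff in
/-- Local energy balance `∂ₜ e + div F + μ ‖Dv‖_F² = 0` for smooth solutions of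
the Navier–Stokes–Korteweg system on an open set `U ⊆ ℝᵈ × ℝ`, with energy
density `e = W(ρ) + ½ρ‖v‖² + (γ/2)‖∇ρ‖²` and flux
`F = ρ(W'(ρ) + ½‖v‖²)v − γρ(Δρ)v − γ(∂ₜρ)∇ρ − μ(Dv)ᵀv`. -/
theorem nsk_local_energy_balance
    (d : ℕ) (W : ℝ → ℝ) (hW : ContDiff ℝ (⊤ : ℕ∞) W) (γ μ : ℝ)
    (U : Set ((Fin d → ℝ) × ℝ)) (hU : IsOpen U)
    (ρ : (Fin d → ℝ) → ℝ → ℝ) (v : (Fin d → ℝ) → ℝ → (Fin d → ℝ))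
    (hρ : ContDiffOn ℝ (⊤ : ℕ∞) (fun z : (Fin d → ℝ) × ℝ => ρ z.1 z.2) U)
    (hv : ContDiffOn ℝ (⊤ : ℕ∞) (fun z : (Fin d → ℝ) × ℝ => v z.1 z.2) U)
    -- mass equation  ∂ₜρ + div(ρv) = 0 on U
    (hmass : ∀ z ∈ U,
      pdt ρ z.1 z.2 + ∑ i, pdx i (fun y s => ρ y s * v y s i) z.1 z.2 = 0)
    -- momentum equation  ∂ₜ(ρv) + div(ρ v⊗v) + ∇(p∘ρ) = μ Δv + γ ρ ∇(Δρ) on U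
    (hmom : ∀ z ∈ U, ∀ j : Fin d,
      pdt (fun y s => ρ y s * v y s j) z.1 z.2
        + ∑ i, pdx i (fun y s => ρ y s * v y s i * v y s j) z.1 z.2
        + pdx j (fun y s => press W (ρ y s)) z.1 z.2
      = μ * lap (fun y s => v y s j) z.1 z.2
        + γ * ρ z.1 z.2 * pdx j (fun y s => lap ρ y s) z.1 z.2) :
    ∀ z ∈ U,
      pdt (fun y s =>
          W (ρ y s) + (1/2) * ρ y s * (∑ l, (v y s l) ^ 2)
            + (γ/2) * ∑ l, (pdx l ρ y s) ^ 2) z.1 z.2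
      + (∑ i, pdx i (fun y s =>
            ρ y s * (deriv W (ρ y s) + (1/2) * ∑ l, (v y s l) ^ 2) * v y s i
            - γ * ρ y s * lap ρ y s * v y s i
            - γ * pdt ρ y s * pdx i ρ y s
            - μ * ∑ l, pdx i (fun z' r => v z' r l) y s * v y s l) z.1 z.2)
      + μ * ∑ i, ∑ j, (pdx j (fun y s => v y s i) z.1 z.2) ^ 2
      = 0 := by
  intro z hz
  have hUz : U ∈ nhds z := hU.mem_nhds hz
  -- basic differentiability facts
  have hρd : DifferentiableAt ℝ (fun w : (Fin d → ℝ) × ℝ => ρ w.1 w.2) z :=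
    (hρ.contDiffAt hUz).differentiableAt (by simp)
  have hvC : ∀ l : Fin d, ContDiffOn ℝ (⊤ : ℕ∞) (fun w : (Fin d → ℝ) × ℝ => v w.1 w.2 l) U := fun l =>
    (ContinuousLinearMap.proj (R := ℝ) (φ := fun _ : Fin d => ℝ) l).contDiff.comp_contDiffOn hv
  have hvd : ∀ l, DifferentiableAt ℝ (fun w : (Fin d → ℝ) × ℝ => v w.1 w.2 l) z := fun l =>
    ((hvC l).contDiffAt hUz).differentiableAt (by simp)
  have hW1 : Differentiable ℝ W := hW.differentiable (by simp)
  have hW2 : ContDiff ℝ ∞ (deriv W) := (contDiff_infty_iff_deriv.mp (hW.of_le (by simp))).2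
  have hW2d : Differentiable ℝ (deriv W) := hW2.differentiable (by simp)
  have hWρd : DifferentiableAt ℝ (fun w : (Fin d → ℝ) × ℝ => deriv W (ρ w.1 w.2)) z :=
    (hW2d (ρ z.1 z.2)).fun_comp' z hρd
  have hρxJ : ∀ i : Fin d, DifferentiableAt ℝ (fun w : (Fin d → ℝ) × ℝ => pdx i ρ w.1 w.2) z :=
    fun i => aux_diff_pdx hU ρ hρ hz i
  have hρtJ : DifferentiableAt ℝ (fun w : (Fin d → ℝ) × ℝ => pdt ρ w.1 w.2) z :=
    aux_diff_pdt hU ρ hρ hz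
  have hlapJ : DifferentiableAt ℝ (fun w : (Fin d → ℝ) × ℝ => lap ρ w.1 w.2) z :=
    aux_diff_lap hU ρ hρ hz
  have hvxJ : ∀ (l i : Fin d), DifferentiableAt ℝ
      (fun w : (Fin d → ℝ) × ℝ => pdx i (fun z' r => v z' r l) w.1 w.2) z :=
    fun l i => aux_diff_pdx hU (fun z' r => v z' r l) (hvC l) hz i
  -- time-direction one-dimensional derivatives
  have ht_ρ : HasDerivAt (fun s => ρ z.1 s) (pdt ρ z.1 z.2) z.2 := pdt_hasDerivAt ρ hρd
  have ht_v : ∀ l, HasDerivAt (fun s => v z.1 s l) (pdt (fun y s => v y s l) z.1 z.2) z.2 :=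
    fun l => pdt_hasDerivAt (fun y s => v y s l) (hvd l)
  have ht_px : ∀ l, HasDerivAt (fun s => pdx l ρ z.1 s) (pdt (pdx l ρ) z.1 z.2) z.2 :=
    fun l => pdt_hasDerivAt (pdx l ρ) (hρxJ l)
  have ht_W : HasDerivAt (fun s => W (ρ z.1 s)) (deriv W (ρ z.1 z.2) * pdt ρ z.1 z.2) z.2 :=
    (hW1 (ρ z.1 z.2)).hasDerivAt.comp z.2 ht_ρ
  have ht_vsq : ∀ l, HasDerivAt (fun s => v z.1 s l ^ 2)
      (2 * v z.1 z.2 l * pdt (fun y s => v y s l) z.1 z.2) z.2 := fun l => by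
    simpa using (ht_v l).fun_pow 2
  have ht_pxsq : ∀ l, HasDerivAt (fun s => pdx l ρ z.1 s ^ 2)
      (2 * pdx l ρ z.1 z.2 * pdt (pdx l ρ) z.1 z.2) z.2 := fun l => by
    simpa using (ht_px l).fun_pow 2
  -- spatial one-dimensional derivatives
  have hx_ρ : ∀ i, HasDerivAt (fun s => ρ (Function.update z.1 i s) z.2)
      (pdx i ρ z.1 z.2) (z.1 i) := fun i => pdx_hasDerivAt ρ i hρd
  have hx_v : ∀ l i, HasDerivAt (fun s => v (Function.update z.1 i s) z.2 l)
      (pdx i (fun y s => v y s l) z.1 z.2) (z.1 i) :=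
    fun l i => pdx_hasDerivAt (fun y s => v y s l) i (hvd l)
  have hx_W' : ∀ i, HasDerivAt (fun s => deriv W (ρ (Function.update z.1 i s) z.2))
      (pdx i (fun y s => deriv W (ρ y s)) z.1 z.2) (z.1 i) :=
    fun i => pdx_hasDerivAt (fun y s => deriv W (ρ y s)) i hWρd
  have hx_lap : ∀ i, HasDerivAt (fun s => lap ρ (Function.update z.1 i s) z.2)
      (pdx i (fun y s => lap ρ y s) z.1 z.2) (z.1 i) :=
    fun i => pdx_hasDerivAt (fun y s => lap ρ y s) i hlapJ
  have hx_pt : ∀ i, HasDerivAt (fun s => pdt ρ (Function.update z.1 i s) z.2)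
      (pdx i (pdt ρ) z.1 z.2) (z.1 i) := fun i => pdx_hasDerivAt (pdt ρ) i hρtJ
  have hx_px : ∀ i, HasDerivAt (fun s => pdx i ρ (Function.update z.1 i s) z.2)
      (pdx i (pdx i ρ) z.1 z.2) (z.1 i) := fun i => pdx_hasDerivAt (pdx i ρ) i (hρxJ i)
  have hx_pv : ∀ l i, HasDerivAt
      (fun s => pdx i (fun z' r => v z' r l) (Function.update z.1 i s) z.2)
      (pdx i (pdx i (fun z' r => v z' r l)) z.1 z.2) (z.1 i) :=
    fun l i => pdx_hasDerivAt (pdx i (fun z' r => v z' r l)) i (hvxJ l i)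
  have hx_vsq : ∀ l i, HasDerivAt (fun s => v (Function.update z.1 i s) z.2 l ^ 2)
      (2 * v z.1 z.2 l * pdx i (fun y s => v y s l) z.1 z.2) (z.1 i) := fun l i => by
    have h := (hx_v l i).fun_pow 2
    simp only [Function.update_eq_self] at h
    simpa using h
  -- the time derivative of the energy density
  have hEt : pdt (fun y s =>
          W (ρ y s) + (1/2) * ρ y s * (∑ l, (v y s l) ^ 2)
            + (γ/2) * ∑ l, (pdx l ρ y s) ^ 2) z.1 z.2
      = deriv W (ρ z.1 z.2) * pdt ρ z.1 z.2
        + (1/2 * pdt ρ z.1 z.2 * (∑ l, v z.1 z.2 l ^ 2)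
            + 1/2 * ρ z.1 z.2 * ∑ l, 2 * v z.1 z.2 l * pdt (fun y s => v y s l) z.1 z.2)
        + γ/2 * ∑ l, 2 * pdx l ρ z.1 z.2 * pdt (pdx l ρ) z.1 z.2 := by
    have h := ((ht_W.fun_add ((ht_ρ.const_mul (1/2 : ℝ)).fun_mul
        (HasDerivAt.fun_sum (u := Finset.univ) fun l _ => ht_vsq l))).fun_add
        ((HasDerivAt.fun_sum (u := Finset.univ) fun l _ => ht_pxsq l).const_mul (γ/2))).deriv
    exact h.trans (by ring)
  -- the divergence of the flux, term by term
  have hFl : ∀ i, pdx i (fun y s =>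
        ρ y s * (deriv W (ρ y s) + (1/2) * ∑ l, (v y s l) ^ 2) * v y s i
          - γ * ρ y s * lap ρ y s * v y s i
          - γ * pdt ρ y s * pdx i ρ y s
          - μ * ∑ l, pdx i (fun z' r => v z' r l) y s * v y s l) z.1 z.2
      = (pdx i ρ z.1 z.2 * (deriv W (ρ z.1 z.2) + 1/2 * ∑ l, v z.1 z.2 l ^ 2)
            + ρ z.1 z.2 * (pdx i (fun y s => deriv W (ρ y s)) z.1 z.2
              + 1/2 * ∑ l, 2 * v z.1 z.2 l * pdx i (fun y s => v y s l) z.1 z.2)) * v z.1 z.2 i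
          + ρ z.1 z.2 * (deriv W (ρ z.1 z.2) + 1/2 * ∑ l, v z.1 z.2 l ^ 2)
            * pdx i (fun y s => v y s i) z.1 z.2
        - ((γ * pdx i ρ z.1 z.2 * lap ρ z.1 z.2
              + γ * ρ z.1 z.2 * pdx i (fun y s => lap ρ y s) z.1 z.2) * v z.1 z.2 i
            + γ * ρ z.1 z.2 * lap ρ z.1 z.2 * pdx i (fun y s => v y s i) z.1 z.2)
        - (γ * pdx i (pdt ρ) z.1 z.2 * pdx i ρ z.1 z.2
            + γ * pdt ρ z.1 z.2 * pdx i (pdx i ρ) z.1 z.2)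
        - μ * ∑ l, (pdx i (pdx i (fun z' r => v z' r l)) z.1 z.2 * v z.1 z.2 l
            + pdx i (fun y s => v y s l) z.1 z.2 * pdx i (fun y s => v y s l) z.1 z.2) := by
    intro i
    have h := (((((hx_ρ i).fun_mul ((hx_W' i).fun_add
        ((HasDerivAt.fun_sum (u := Finset.univ) fun l _ => hx_vsq l i).const_mul (1/2 : ℝ)))).fun_mul
          (hx_v i i)).fun_sub
        ((((hx_ρ i).const_mul γ).fun_mul (hx_lap i)).fun_mul (hx_v i i))).fun_sub
        (((hx_pt i).const_mul γ).fun_mul (hx_px i))).fun_sub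
        ((HasDerivAt.fun_sum (u := Finset.univ) fun l _ => (hx_pv l i).fun_mul (hx_v l i)).const_mul μ)
    simp only [Function.update_eq_self] at h
    exact h.deriv.trans (by ring)
  -- the mass equation, expanded
  have hMx : ∀ i, pdx i (fun y s => ρ y s * v y s i) z.1 z.2
      = pdx i ρ z.1 z.2 * v z.1 z.2 i + ρ z.1 z.2 * pdx i (fun y s => v y s i) z.1 z.2 :=
    fun i => by
      have h := (hx_ρ i).mul (hx_v i i)
      simp only [Function.update_eq_self] at h
      exact h.deriv
  have hM0 := hmass z hz
  rw [Finset.sum_congr rfl fun i _ => hMx i] at hM0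
  -- the momentum equation, expanded
  have hpress : HasDerivAt (press W)
      (ρ z.1 z.2 * deriv (deriv W) (ρ z.1 z.2)) (ρ z.1 z.2) := by
    have h := ((hasDerivAt_id (ρ z.1 z.2)).fun_mul (hW2d (ρ z.1 z.2)).hasDerivAt).fun_sub
      (hW1 (ρ z.1 z.2)).hasDerivAt
    exact (by simpa using h : HasDerivAt (fun r => r * deriv W r - W r) _ _)
  have hP : ∀ j, pdt ρ z.1 z.2 * v z.1 z.2 j + ρ z.1 z.2 * pdt (fun y s => v y s j) z.1 z.2
      + (∑ i, ((pdx i ρ z.1 z.2 * v z.1 z.2 i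
            + ρ z.1 z.2 * pdx i (fun y s => v y s i) z.1 z.2) * v z.1 z.2 j
          + ρ z.1 z.2 * v z.1 z.2 i * pdx i (fun y s => v y s j) z.1 z.2))
      + ρ z.1 z.2 * deriv (deriv W) (ρ z.1 z.2) * pdx j ρ z.1 z.2
      = μ * (∑ i, pdx i (pdx i (fun z' r => v z' r j)) z.1 z.2)
        + γ * ρ z.1 z.2 * pdx j (fun y s => lap ρ y s) z.1 z.2 := by
    intro j
    have h := hmom z hz j
    have h1 : pdt (fun y s => ρ y s * v y s j) z.1 z.2
        = pdt ρ z.1 z.2 * v z.1 z.2 j + ρ z.1 z.2 * pdt (fun y s => v y s j) z.1 z.2 :=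
      (ht_ρ.mul (ht_v j)).deriv
    have h2 : ∀ i, pdx i (fun y s => ρ y s * v y s i * v y s j) z.1 z.2
        = (pdx i ρ z.1 z.2 * v z.1 z.2 i
            + ρ z.1 z.2 * pdx i (fun y s => v y s i) z.1 z.2) * v z.1 z.2 j
          + ρ z.1 z.2 * v z.1 z.2 i * pdx i (fun y s => v y s j) z.1 z.2 := fun i => by
      have hh := ((hx_ρ i).fun_mul (hx_v i i)).fun_mul (hx_v j i)
      simp only [Function.update_eq_self] at hh
      exact hh.deriv
    have h3 : pdx j (fun y s => press W (ρ y s)) z.1 z.2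
        = ρ z.1 z.2 * deriv (deriv W) (ρ z.1 z.2) * pdx j ρ z.1 z.2 :=
      pdx_comp ρ j hρd hpress
    have h4 : lap (fun z' r => v z' r j) z.1 z.2
        = ∑ i, pdx i (pdx i (fun z' r => v z' r j)) z.1 z.2 := rfl
    rw [h1, Finset.sum_congr rfl fun i _ => h2 i, h3, h4] at h
    exact h
  -- Clairaut and chain-rule identities
  have hct : ∀ l : Fin d, pdt (pdx l ρ) z.1 z.2 = pdx l (pdt ρ) z.1 z.2 :=
    fun l => aux_clairaut hU ρ hρ hz l
  have haW : ∀ i : Fin d, pdx i (fun y s => deriv W (ρ y s)) z.1 z.2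
      = deriv (deriv W) (ρ z.1 z.2) * pdx i ρ z.1 z.2 :=
    fun i => pdx_comp ρ i hρd (hW2d (ρ z.1 z.2)).hasDerivAt
  have hΔ : lap ρ z.1 z.2 = ∑ i, pdx i (pdx i ρ) z.1 z.2 := rfl
  -- assemble
  rw [hEt, Finset.sum_congr rfl fun i _ => hFl i]
  exact final_algebra d γ μ (deriv W (ρ z.1 z.2)) (deriv (deriv W) (ρ z.1 z.2)) (ρ z.1 z.2)
    (pdt ρ z.1 z.2) (lap ρ z.1 z.2)
    (fun l => pdx l ρ z.1 z.2) (fun l => v z.1 z.2 l)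
    (fun l => pdt (fun y s => v y s l) z.1 z.2)
    (fun l => pdt (pdx l ρ) z.1 z.2) (fun l => pdx l (pdt ρ) z.1 z.2)
    (fun i => pdx i (fun y s => lap ρ y s) z.1 z.2)
    (fun i => pdx i (pdx i ρ) z.1 z.2)
    (fun i => pdx i (fun y s => deriv W (ρ y s)) z.1 z.2)
    (fun l i => pdx i (fun y s => v y s l) z.1 z.2)
    (fun l i => pdx i (pdx i (fun z' r => v z' r l)) z.1 z.2)
    hΔ hct haW hM0 hP
end

section
/- Let W : ℝ → ℝ be twice continuously differentiable, p(r) := rW'(r) − W(r), γ, μ ∈ ℝ, and let U ⊆ ℝᵈ × ℝ be open. Let ρ : U → ℝ and v : U → ℝᵈ be smooth. Then (ρ, v) solves the NSK system on U if and only if there exist smooth τ : U → ℝ and q : U → ℝᵈ such that the mixed system holds on U: (i) ∂ₜρ + div(ρv) = 0; (ii) ρ∂ₜv + div(ρv⊗v) − div(ρv)·v + ρ∇τ − ½ρ∇(‖v‖²) − μΔv = 0; (iii) τ − W'(ρ) + γ div q − ½‖v‖² = 0; (iv) q − ∇ρ = 0. Moreover, in that case necessarily τ = W'(ρ) − γΔρ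 + ½‖v‖² and q = ∇ρ. -/
open Set

/-- The NSK system (mass + momentum equations) on an open set `U ⊆ ℝᵈ × ℝ`. -/
def SolvesNSK (d : ℕ) (W : ℝ → ℝ) (γ μ : ℝ) (U : Set ((Fin d → ℝ) × ℝ))
    (ρ : (Fin d → ℝ) → ℝ → ℝ) (v : (Fin d → ℝ) → ℝ → (Fin d → ℝ)) : Prop :=
  (∀ z ∈ U,
    pdt ρ z.1 z.2 + ∑ i, pdx i (fun y s => ρ y s * v y s i) z.1 z.2 = 0) ∧
  (∀ z ∈ U, ∀ j : Fin d,
    pdt (fun y s => ρ y s * v y s j) z.1 z.2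
      + ∑ i, pdx i (fun y s => ρ y s * v y s i * v y s j) z.1 z.2
      + pdx j (fun y s => press W (ρ y s)) z.1 z.2
    = μ * lap (fun y s => v y s j) z.1 z.2
      + γ * ρ z.1 z.2 * pdx j (fun y s => lap ρ y s) z.1 z.2)

/-- The mixed formulation (i)–(iv) of the NSK system with auxiliary variables
`τ` and `q` on an open set `U ⊆ ℝᵈ × ℝ`. -/
def SolvesMixed (d : ℕ) (W : ℝ → ℝ) (γ μ : ℝ) (U : Set ((Fin d → ℝ) × ℝ))
    (ρ : (Fin d → ℝ) → ℝ → ℝ) (v : (Fin d → ℝ) → ℝ → (Fin d → ℝ))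
    (τ : (Fin d → ℝ) → ℝ → ℝ) (q : (Fin d → ℝ) → ℝ → (Fin d → ℝ)) : Prop :=
  -- (i) mass equation
  (∀ z ∈ U,
    pdt ρ z.1 z.2 + ∑ i, pdx i (fun y s => ρ y s * v y s i) z.1 z.2 = 0) ∧
  -- (ii) reformulated momentum equation
  (∀ z ∈ U, ∀ j : Fin d,
    ρ z.1 z.2 * pdt (fun y s => v y s j) z.1 z.2
      + ∑ i, pdx i (fun y s => ρ y s * v y s i * v y s j) z.1 z.2
      - (∑ i, pdx i (fun y s => ρ y s * v y s i) z.1 z.2) * v z.1 z.2 j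
      + ρ z.1 z.2 * pdx j τ z.1 z.2
      - (1/2) * ρ z.1 z.2 * pdx j (fun y s => ∑ l, (v y s l) ^ 2) z.1 z.2
      - μ * lap (fun y s => v y s j) z.1 z.2 = 0) ∧
  -- (iii) equation for τ
  (∀ z ∈ U,
    τ z.1 z.2 - deriv W (ρ z.1 z.2)
      + γ * ∑ i, pdx i (fun y s => q y s i) z.1 z.2
      - (1/2) * ∑ l, (v z.1 z.2 l) ^ 2 = 0) ∧
  -- (iv) equation for q
  (∀ z ∈ U, ∀ i : Fin d, q z.1 z.2 i - pdx i ρ z.1 z.2 = 0)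

/- ### Auxiliary infrastructure -/

namespace NSKaux

open Function Filter Topology
open scoped ContDiff

variable {d : ℕ}

/-- Directional derivative of an uncurried function. -/
noncomputable def DD (w : (Fin d → ℝ) × ℝ) (F : (Fin d → ℝ) × ℝ → ℝ)
    (z : (Fin d → ℝ) × ℝ) : ℝ := fderiv ℝ F z w

/-- The `i`-th spatial coordinate direction. -/
noncomputable def eX (i : Fin d) : (Fin d → ℝ) × ℝ := (Pi.single i 1, 0)

/-- The time direction. -/
noncomputable def eT : (Fin d → ℝ) × ℝ := (0, 1)

lemma hasDerivAt_lineX (i : Fin d) (x : Fin d → ℝ) (t : ℝ) (s : ℝ) :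
    HasDerivAt (fun s => ((Function.update x i s, t) : (Fin d → ℝ) × ℝ)) (eX i) s :=
  (hasDerivAt_update x i s).prodMk (hasDerivAt_const s t)

lemma hasDerivAt_lineT (x : Fin d → ℝ) (t : ℝ) :
    HasDerivAt (fun s => ((x, s) : (Fin d → ℝ) × ℝ)) (eT (d := d)) t :=
  (hasDerivAt_const t x).prodMk (hasDerivAt_id t)

lemma pdx_eq {F : (Fin d → ℝ) × ℝ → ℝ} {f : (Fin d → ℝ) → ℝ → ℝ}
    (hf : ∀ y s, f y s = F (y, s)) (i : Fin d) (z : (Fin d → ℝ) × ℝ)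
    (hF : DifferentiableAt ℝ F z) : pdx i f z.1 z.2 = DD (eX i) F z := by
  have h := HasFDerivAt.comp_hasDerivAt_of_eq (hl := hF.hasFDerivAt)
      (hf := hasDerivAt_lineX i z.1 z.2 (z.1 i)) (hy := by simp [Function.update_eq_self])
  unfold pdx
  simp only [hf]
  exact h.deriv

lemma pdt_eq {F : (Fin d → ℝ) × ℝ → ℝ} {f : (Fin d → ℝ) → ℝ → ℝ}
    (hf : ∀ y s, f y s = F (y, s)) (z : (Fin d → ℝ) × ℝ)
    (hF : DifferentiableAt ℝ F z) : pdt f z.1 z.2 = DD eT F z := by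
  have h := HasFDerivAt.comp_hasDerivAt_of_eq (hl := hF.hasFDerivAt)
      (hf := hasDerivAt_lineT z.1 z.2) (hy := by simp)
  have hfz : f z.1 = fun s => F (z.1, s) := funext fun s => hf z.1 s
  unfold pdt
  rw [hfz]
  exact h.deriv

lemma pdx_congr {U : Set ((Fin d → ℝ) × ℝ)} (hU : IsOpen U)
    {f g : (Fin d → ℝ) → ℝ → ℝ} (h : ∀ z ∈ U, f z.1 z.2 = g z.1 z.2)
    {z : (Fin d → ℝ) × ℝ} (hz : z ∈ U) (i : Fin d) :
    pdx i f z.1 z.2 = pdx i g z.1 z.2 := by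
  unfold pdx
  apply Filter.EventuallyEq.deriv_eq
  have hc : ContinuousAt (fun s => ((Function.update z.1 i s, z.2) : (Fin d → ℝ) × ℝ)) (z.1 i) :=
    (hasDerivAt_lineX i z.1 z.2 (z.1 i)).continuousAt
  have hm : ∀ᶠ s in 𝓝 (z.1 i), (Function.update z.1 i s, z.2) ∈ U := by
    have := hc.preimage_mem_nhds (hU.mem_nhds (by simpa [Function.update_eq_self] using hz))
    exact this
  filter_upwards [hm] with s hs
  exact h _ hs

variable {U : Set ((Fin d → ℝ) × ℝ)}

lemma diffAt1 (hU : IsOpen U) {F : (Fin d → ℝ) × ℝ → ℝ} (hF : ContDiffOn ℝ 1 F U)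
    {z : (Fin d → ℝ) × ℝ} (hz : z ∈ U) : DifferentiableAt ℝ F z :=
  (hF.contDiffAt (hU.mem_nhds hz)).differentiableAt one_ne_zero

lemma diffAt (hU : IsOpen U) {F : (Fin d → ℝ) × ℝ → ℝ} (hF : ContDiffOn ℝ ∞ F U)
    {z : (Fin d → ℝ) × ℝ} (hz : z ∈ U) : DifferentiableAt ℝ F z :=
  diffAt1 hU (hF.of_le (by exact_mod_cast le_top)) hz

lemma contDiffOn_DD (hU : IsOpen U) (w : (Fin d → ℝ) × ℝ) {F : (Fin d → ℝ) × ℝ → ℝ}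
    (hF : ContDiffOn ℝ ∞ F U) : ContDiffOn ℝ ∞ (DD w F) U :=
  (hF.fderiv_of_isOpen hU (le_of_eq rfl)).clm_apply contDiffOn_const

lemma DD_add {w F G} {z : (Fin d → ℝ) × ℝ} (hF : DifferentiableAt ℝ F z)
    (hG : DifferentiableAt ℝ G z) :
    DD w (fun z => F z + G z) z = DD w F z + DD w G z := by
  simp [DD, fderiv_fun_add hF hG]

lemma DD_sub {w F G} {z : (Fin d → ℝ) × ℝ} (hF : DifferentiableAt ℝ F z)
    (hG : DifferentiableAt ℝ G z) :
    DD w (fun z => F z - G z) z = DD w F z - DD w G z := by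
  simp [DD, fderiv_fun_sub hF hG]

lemma DD_mul {w F G} {z : (Fin d → ℝ) × ℝ} (hF : DifferentiableAt ℝ F z)
    (hG : DifferentiableAt ℝ G z) :
    DD w (fun z => F z * G z) z = F z * DD w G z + G z * DD w F z := by
  simp [DD, fderiv_fun_mul hF hG]

lemma DD_const_mul {w F} {z : (Fin d → ℝ) × ℝ} (hF : DifferentiableAt ℝ F z) (c : ℝ) :
    DD w (fun z => c * F z) z = c * DD w F z := by
  simp [DD, fderiv_const_mul hF c]

lemma DD_comp {w} {g : ℝ → ℝ} {F} {z : (Fin d → ℝ) × ℝ}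
    (hg : DifferentiableAt ℝ g (F z)) (hF : DifferentiableAt ℝ F z) :
    DD w (fun z => g (F z)) z = deriv g (F z) * DD w F z := by
  have h := HasDerivAt.comp_hasFDerivAt (x := z) hg.hasDerivAt hF.hasFDerivAt
  have h2 : fderiv ℝ (fun z => g (F z)) z = deriv g (F z) • fderiv ℝ F z := h.fderiv
  simp [DD, h2]

/-- combined congruence + identification lemma: if `f` agrees on `U` with a
function `F` differentiable at the points of `U`, then `pdx` is `DD` of `F`. -/
lemma pdx_eq_of_eqOn (hU : IsOpen U) {f : (Fin d → ℝ) → ℝ → ℝ} {F}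
    (hfU : ∀ w ∈ U, f w.1 w.2 = F w)
    (hF : ∀ w ∈ U, DifferentiableAt ℝ F w)
    {z : (Fin d → ℝ) × ℝ} (hz : z ∈ U) (i : Fin d) :
    pdx i f z.1 z.2 = DD (eX i) F z := by
  rw [pdx_congr hU (g := fun y s => F (y, s)) hfU hz i]
  exact pdx_eq (fun _ _ => rfl) i z (hF z hz)

lemma lap_eq (hU : IsOpen U) {f : (Fin d → ℝ) → ℝ → ℝ} {F}
    (hf : ∀ y s, f y s = F (y, s)) (hF : ContDiffOn ℝ ∞ F U)
    {z : (Fin d → ℝ) × ℝ} (hz : z ∈ U) :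
    lap f z.1 z.2 = ∑ i, DD (eX i) (DD (eX i) F) z := by
  unfold lap
  refine Finset.sum_congr rfl fun i _ => ?_
  exact pdx_eq_of_eqOn hU
    (fun w hw => pdx_eq hf i w (diffAt hU hF hw))
    (fun w hw => diffAt hU (contDiffOn_DD hU _ hF) hw) hz i

end NSKaux

/-- `(ρ, v)` solves the NSK system on an open set `U` iff there exist
continuously differentiable `τ`, `q` solving the mixed formulation on `U`;
moreover, in that case necessarily `τ = W'(ρ) − γΔρ + ½‖v‖²` and `q = ∇ρ`. -/
theorem nsk_mixed_formulation_equiv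
    (d : ℕ) (W : ℝ → ℝ) (hW : ContDiff ℝ 2 W) (γ μ : ℝ)
    (U : Set ((Fin d → ℝ) × ℝ)) (hU : IsOpen U)
    (ρ : (Fin d → ℝ) → ℝ → ℝ) (v : (Fin d → ℝ) → ℝ → (Fin d → ℝ))
    (hρ : ContDiffOn ℝ (⊤ : ℕ∞) (fun z : (Fin d → ℝ) × ℝ => ρ z.1 z.2) U)
    (hv : ContDiffOn ℝ (⊤ : ℕ∞) (fun z : (Fin d → ℝ) × ℝ => v z.1 z.2) U) :
    (SolvesNSK d W γ μ U ρ v ↔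
      ∃ (τ : (Fin d → ℝ) → ℝ → ℝ) (q : (Fin d → ℝ) → ℝ → (Fin d → ℝ)),
        ContDiffOn ℝ 1 (fun z : (Fin d → ℝ) × ℝ => τ z.1 z.2) U ∧
        ContDiffOn ℝ 1 (fun z : (Fin d → ℝ) × ℝ => q z.1 z.2) U ∧
        SolvesMixed d W γ μ U ρ v τ q)
    ∧
    (∀ (τ : (Fin d → ℝ) → ℝ → ℝ) (q : (Fin d → ℝ) → ℝ → (Fin d → ℝ)),
      ContDiffOn ℝ 1 (fun z : (Fin d → ℝ) × ℝ => τ z.1 z.2) U →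
      ContDiffOn ℝ 1 (fun z : (Fin d → ℝ) × ℝ => q z.1 z.2) U →
      SolvesMixed d W γ μ U ρ v τ q →
      ∀ z ∈ U,
        (τ z.1 z.2
            = deriv W (ρ z.1 z.2) - γ * lap ρ z.1 z.2
              + (1/2) * ∑ l, (v z.1 z.2 l) ^ 2) ∧
        (∀ i : Fin d, q z.1 z.2 i = pdx i ρ z.1 z.2)) := by
  classical
  open NSKaux in
  open scoped ContDiff in
  -- uncurried functions
  set Fρ : (Fin d → ℝ) × ℝ → ℝ := fun z => ρ z.1 z.2 with hFρdef
  have hFρ : ContDiffOn ℝ ∞ Fρ U := hρ.of_le (by simp)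
  have hFv : ∀ l : Fin d, ContDiffOn ℝ ∞ (fun z : (Fin d → ℝ) × ℝ => v z.1 z.2 l) U :=
    fun l => ((ContinuousLinearMap.proj (R := ℝ) (φ := fun _ : Fin d => ℝ) l).contDiff).comp_contDiffOn
      (hv.of_le (by simp))
  -- derivative of W
  have hW1 : Differentiable ℝ W := hW.differentiable (by norm_num)
  have hdW : ContDiff ℝ 1 (deriv W) := by
    have h2 : ContDiff ℝ (1 + 1 : ℕ) W := by exact_mod_cast hW
    exact (contDiff_succ_iff_deriv.mp (by exact_mod_cast h2)).2.2
  have hdW1 : Differentiable ℝ (deriv W) := hdW.differentiable one_ne_zero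
  -- derivative of press
  have hpress : ∀ r : ℝ, HasDerivAt (press W) (r * deriv (deriv W) r) r := by
    intro r
    have h1 : HasDerivAt (fun r : ℝ => r * deriv W r)
        (1 * deriv W r + r * deriv (deriv W) r) r :=
      (hasDerivAt_id r).mul ((hdW1 r).hasDerivAt)
    have h2 := h1.sub ((hW1 r).hasDerivAt)
    have h3 : HasDerivAt (press W) (1 * deriv W r + r * deriv (deriv W) r - deriv W r) r := h2
    convert h3 using 1
    ring
  -- uncurried Laplacian of ρ and sum of squares of v
  set FlapF : (Fin d → ℝ) × ℝ → ℝ := fun z => ∑ i, DD (eX i) (DD (eX i) Fρ) z with hFlapdef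
  have hFlap : ContDiffOn ℝ ∞ FlapF U :=
    ContDiffOn.sum fun i _ => contDiffOn_DD hU _ (contDiffOn_DD hU _ hFρ)
  have hlapU : ∀ w ∈ U, lap ρ w.1 w.2 = FlapF w :=
    fun w hw => lap_eq hU (fun _ _ => rfl) hFρ hw
  set FS : (Fin d → ℝ) × ℝ → ℝ := fun z => ∑ l, (v z.1 z.2 l) ^ 2 with hFSdef
  have hFS : ContDiffOn ℝ ∞ FS U := ContDiffOn.sum fun l _ => (hFv l).pow 2
  -- the canonical τ and its uncurried version
  set Fτ : (Fin d → ℝ) × ℝ → ℝ :=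
    fun z => deriv W (Fρ z) - γ * FlapF z + (1/2) * FS z with hFτdef
  have hFτ : ContDiffOn ℝ 1 Fτ U := by
    refine ContDiffOn.add (ContDiffOn.sub ?_ ?_) ?_
    · exact hdW.comp_contDiffOn (hFρ.of_le (by exact_mod_cast le_top))
    · exact (contDiffOn_const.mul hFlap).of_le (by exact_mod_cast le_top)
    · exact (contDiffOn_const.mul hFS).of_le (by exact_mod_cast le_top)
  -- the central pointwise equivalence between the momentum equations
  have momentum_iff : ∀ z ∈ U, ∀ (τ : (Fin d → ℝ) → ℝ → ℝ),
      (∀ w ∈ U, τ w.1 w.2 = Fτ w) →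
      (pdt ρ z.1 z.2 + ∑ i, pdx i (fun y s => ρ y s * v y s i) z.1 z.2 = 0) →
      ∀ j : Fin d,
      ((pdt (fun y s => ρ y s * v y s j) z.1 z.2
          + ∑ i, pdx i (fun y s => ρ y s * v y s i * v y s j) z.1 z.2
          + pdx j (fun y s => press W (ρ y s)) z.1 z.2
        = μ * lap (fun y s => v y s j) z.1 z.2
          + γ * ρ z.1 z.2 * pdx j (fun y s => lap ρ y s) z.1 z.2) ↔
      (ρ z.1 z.2 * pdt (fun y s => v y s j) z.1 z.2
          + ∑ i, pdx i (fun y s => ρ y s * v y s i * v y s j) z.1 z.2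
          - (∑ i, pdx i (fun y s => ρ y s * v y s i) z.1 z.2) * v z.1 z.2 j
          + ρ z.1 z.2 * pdx j τ z.1 z.2
          - (1/2) * ρ z.1 z.2 * pdx j (fun y s => ∑ l, (v y s l) ^ 2) z.1 z.2
          - μ * lap (fun y s => v y s j) z.1 z.2 = 0)) := by
    intro z hz τ hτ hmass j
    have hρz := diffAt hU hFρ hz
    have hvz : ∀ l, DifferentiableAt ℝ (fun z : (Fin d → ℝ) × ℝ => v z.1 z.2 l) z :=
      fun l => diffAt hU (hFv l) hz
    -- rewrite pdt ρ
    have e1 : pdt ρ z.1 z.2 = DD eT Fρ z := pdt_eq (fun _ _ => rfl) z hρz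
    -- rewrite pdt (ρ v_j)
    have e2 : pdt (fun y s => ρ y s * v y s j) z.1 z.2
        = Fρ z * DD eT (fun z : (Fin d → ℝ) × ℝ => v z.1 z.2 j) z
          + v z.1 z.2 j * DD eT Fρ z := by
      rw [pdt_eq (F := fun z : (Fin d → ℝ) × ℝ => Fρ z * v z.1 z.2 j)
        (fun _ _ => rfl) z (hρz.mul (hvz j))]
      exact DD_mul hρz (hvz j)
    -- rewrite pdt v_j
    have e3 : pdt (fun y s => v y s j) z.1 z.2
        = DD eT (fun z : (Fin d → ℝ) × ℝ => v z.1 z.2 j) z :=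
      pdt_eq (fun _ _ => rfl) z (hvz j)
    -- rewrite the pressure term
    have e4 : pdx j (fun y s => press W (ρ y s)) z.1 z.2
        = Fρ z * deriv (deriv W) (Fρ z) * DD (eX j) Fρ z := by
      rw [pdx_eq (F := fun z : (Fin d → ℝ) × ℝ => press W (Fρ z)) (fun _ _ => rfl) j z
        ((hpress (Fρ z)).differentiableAt.comp z hρz)]
      rw [DD_comp (hpress (Fρ z)).differentiableAt hρz, (hpress (Fρ z)).deriv]
    -- rewrite pdx j (lap ρ)
    have e5 : pdx j (fun y s => lap ρ y s) z.1 z.2 = DD (eX j) FlapF z :=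
      pdx_eq_of_eqOn hU hlapU (fun w hw => diffAt hU hFlap hw) hz j
    -- rewrite pdx j (∑ v²)
    have e6 : pdx j (fun y s => ∑ l, (v y s l) ^ 2) z.1 z.2 = DD (eX j) FS z :=
      pdx_eq (fun _ _ => rfl) j z (diffAt hU hFS hz)
    -- rewrite pdx j τ
    have e7 : pdx j τ z.1 z.2
        = deriv (deriv W) (Fρ z) * DD (eX j) Fρ z - γ * DD (eX j) FlapF z
          + (1/2) * DD (eX j) FS z := by
      have hdWρ : DifferentiableAt ℝ (fun z : (Fin d → ℝ) × ℝ => deriv W (Fρ z)) z :=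
        (hdW1 (Fρ z)).comp z hρz
      have hglap : DifferentiableAt ℝ (fun z : (Fin d → ℝ) × ℝ => γ * FlapF z) z :=
        (differentiableAt_const γ).mul (diffAt hU hFlap hz)
      have hgS : DifferentiableAt ℝ (fun z : (Fin d → ℝ) × ℝ => (1/2 : ℝ) * FS z) z :=
        (differentiableAt_const _).mul (diffAt hU hFS hz)
      have hFτdiff : ∀ w ∈ U, DifferentiableAt ℝ Fτ w := fun w hw =>
        (((hdW1 (Fρ w)).comp w (diffAt hU hFρ hw)).sub
          ((differentiableAt_const γ).mul (diffAt hU hFlap hw))).add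
          ((differentiableAt_const _).mul (diffAt hU hFS hw))
      rw [pdx_eq_of_eqOn hU hτ hFτdiff hz j]
      show DD (eX j)
        (fun z : (Fin d → ℝ) × ℝ => deriv W (Fρ z) - γ * FlapF z + (1/2 : ℝ) * FS z) z = _
      rw [DD_add (F := fun z => deriv W (Fρ z) - γ * FlapF z) (hdWρ.sub hglap) hgS, DD_sub hdWρ hglap, DD_comp (hdW1 (Fρ z)) hρz,
        DD_const_mul (diffAt hU hFlap hz) γ,
        DD_const_mul (diffAt hU hFS hz) (1/2)]
    rw [e1] at hmass
    rw [e2, e3, e4, e5, e6, e7]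
    have hρzv : ρ z.1 z.2 = Fρ z := rfl
    rw [hρzv]
    constructor
    · intro h
      linear_combination h - v z.1 z.2 j * hmass
    · intro h
      linear_combination h + v z.1 z.2 j * hmass
  -- canonical τ and q
  set τs : (Fin d → ℝ) → ℝ → ℝ :=
    fun y s => deriv W (ρ y s) - γ * lap ρ y s + (1/2) * ∑ l, (v y s l) ^ 2 with hτsdef
  have hτsU : ∀ w ∈ U, τs w.1 w.2 = Fτ w := by
    intro w hw
    simp only [hτsdef, hFτdef]
    rw [hlapU w hw]
  set qs : (Fin d → ℝ) → ℝ → (Fin d → ℝ) := fun y s => fun i => pdx i ρ y s with hqsdef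
  constructor
  · constructor
    · rintro ⟨hmass, hmom⟩
      refine ⟨τs, qs, ?_, ?_, hmass, ?_, ?_, ?_⟩
      · exact (hFτ.congr hτsU)
      · refine contDiffOn_pi.mpr fun i => ?_
        refine ((contDiffOn_DD hU (eX i) hFρ).of_le (by exact_mod_cast le_top)).congr ?_
        exact fun w hw => pdx_eq (fun _ _ => rfl) i w (diffAt hU hFρ hw)
      · intro z hz j
        exact (momentum_iff z hz τs hτsU (hmass z hz) j).mp (hmom z hz j)
      · intro z hz
        have : ∑ i, pdx i (fun y s => qs y s i) z.1 z.2 = lap ρ z.1 z.2 := rfl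
        rw [this, hτsdef]
        ring
      · intro z hz i
        simp [hqsdef]
    · rintro ⟨τ, q, hτ1, hq1, hmass, hmom, hτeq, hqeq⟩
      have hqU : ∀ i : Fin d, ∀ w ∈ U, q w.1 w.2 i = pdx i ρ w.1 w.2 := by
        intro i w hw
        have := hqeq w hw i
        linarith
      have hsumq : ∀ z ∈ U,
          ∑ i, pdx i (fun y s => q y s i) z.1 z.2 = lap ρ z.1 z.2 := by
        intro z hz
        unfold lap
        refine Finset.sum_congr rfl fun i _ => ?_
        exact pdx_congr hU (fun w hw => hqU i w hw) hz i
      have hτU : ∀ w ∈ U, τ w.1 w.2 = Fτ w := by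
        intro w hw
        have h3 := hτeq w hw
        rw [hsumq w hw] at h3
        rw [← hτsU w hw, hτsdef]
        dsimp only
        linarith
      refine ⟨hmass, ?_⟩
      intro z hz j
      exact (momentum_iff z hz τ hτU (hmass z hz) j).mpr (hmom z hz j)
  · rintro τ q hτ1 hq1 ⟨hmass, hmom, hτeq, hqeq⟩ z hz
    have hqU : ∀ i : Fin d, q z.1 z.2 i = pdx i ρ z.1 z.2 := by
      intro i
      have := hqeq z hz i
      linarith
    refine ⟨?_, hqU⟩
    have hsumq : ∑ i, pdx i (fun y s => q y s i) z.1 z.2 = lap ρ z.1 z.2 := by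
      unfold lap
      refine Finset.sum_congr rfl fun i _ => ?_
      refine pdx_congr hU (fun w hw => ?_) hz i
      have := hqeq w hw i
      linarith
    have h3 := hτeq z hz
    rw [hsumq] at h3
    linarith
end

section
/- Let M ≥ 1, let 0 = x₀ < ⋯ < x_M = 1 be a partition of [0,1], T > 0, and for each cell i ∈ {0,…,M−1} let ρᵢ, vᵢ : [0,T] × [xᵢ, xᵢ₊₁] → ℝ be continuously differentiable. Assume the boundary conditions v₀(t, 0) = 0 and v_{M−1}(t, 1) = 0 for all t ∈ [0,T], and assume that for every t ∈ [0,T] the DG mass equation tested with the constant function 1 holds: Σᵢ ∫_{xᵢ}^{xᵢ₊₁} [ ∂ₜρᵢ(t,x) + ∂ₓ(ρᵢvᵢ)(t,x) ] dx = Σ_{j=1}^{M−1} [ρv]ⱼ(t), where [ρv]ⱼ(t) := (ρ_{j−1}v_{j−1})(t, xⱼ) − (ρⱼvⱼ)(t, xⱼ). Then the total discrete mass t ↦ Σᵢ ∫_{xᵢ}^{xᵢ₊₁} ρᵢ(t,x) dx is constant on [0,T]. -/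
open Set MeasureTheory

/-- Time partial derivative of a function `f t x` of time and one space variable. -/
noncomputable def pt (f : ℝ → ℝ → ℝ) (t x : ℝ) : ℝ := deriv (fun s => f s x) t

/-- Space partial derivative of a function `f t x` of time and one space variable. -/
noncomputable def px (f : ℝ → ℝ → ℝ) (t x : ℝ) : ℝ := deriv (fun y => f t y) x

/-!
Integrating the DG mass equation over each cell, the space derivative of the flux `ρᵢvᵢ`
integrates to its values at the cell ends; summed over the cells these telescope into the
interface jumps `[ρv]ⱼ`, which cancel the right-hand side, and the two boundary values, which
vanish with the velocity. What remains says that `Σᵢ ∫ ∂ₜρᵢ = 0`, and this is the time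
derivative of the total mass by differentiation under the integral sign.
-/

-- For `M = 0` both sides vanish because `M - 1 = 0` in `ℕ`.
theorem Finset.sum_range_sub_eq_sum_Ico_jump {α G : Type*} [AddCommGroup G]
    (F : ℕ → α → G) (x : ℕ → α) (M : ℕ) :
    ∑ i ∈ Finset.range M, (F i (x (i + 1)) - F i (x i))
      = ∑ j ∈ Finset.Ico 1 M, (F (j - 1) (x j) - F j (x j)) + F (M - 1) (x M) - F 0 (x 0) := by
  induction M with
  | zero => simp
  | succ M ih =>
    rcases M with _ | M
    · simp
    · rw [Finset.sum_range_succ, ih, Finset.sum_Ico_succ_top (by omega : 1 ≤ M + 1)]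
      simp only [Nat.add_sub_cancel]
      abel

section PartialDerivatives

variable {f : ℝ → ℝ → ℝ}

theorem hasDerivAt_pt {t y : ℝ} (hf : DifferentiableAt ℝ (fun z : ℝ × ℝ => f z.1 z.2) (t, y)) :
    HasDerivAt (fun s => f s y) (pt f t y) t :=
  (hf.comp (f := fun s => (s, y)) t
    (differentiableAt_id.prodMk (differentiableAt_const y))).hasDerivAt

theorem pt_eq_fderiv {t y : ℝ} (hf : DifferentiableAt ℝ (fun z : ℝ × ℝ => f z.1 z.2) (t, y)) :
    pt f t y = fderiv ℝ (fun z : ℝ × ℝ => f z.1 z.2) (t, y) (1, 0) :=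
  (hasDerivAt_pt hf).unique <| hf.hasFDerivAt.comp_hasDerivAt (f := fun s => (s, y)) t
    ((hasDerivAt_id t).prodMk (hasDerivAt_const t y))

theorem continuous_pt (hf : ContDiff ℝ 1 (fun z : ℝ × ℝ => f z.1 z.2)) :
    Continuous (fun z : ℝ × ℝ => pt f z.1 z.2) := by
  rw [funext fun z : ℝ × ℝ => pt_eq_fderiv (hf.differentiable one_ne_zero (z.1, z.2))]
  exact (hf.continuous_fderiv one_ne_zero).clm_apply continuous_const

theorem continuous_pt_apply (hf : ContDiff ℝ 1 (fun z : ℝ × ℝ => f z.1 z.2)) (t : ℝ) :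
    Continuous (pt f t) :=
  (continuous_pt hf).comp (continuous_const.prodMk continuous_id)

theorem contDiff_slice (hf : ContDiff ℝ 1 (fun z : ℝ × ℝ => f z.1 z.2)) (t : ℝ) :
    ContDiff ℝ 1 (f t) :=
  hf.comp (contDiff_const.prodMk contDiff_id)

theorem continuous_px {t : ℝ} (hf : ContDiff ℝ 1 (f t)) : Continuous (px f t) :=
  hf.continuous_deriv le_rfl

theorem integral_px {t : ℝ} (hf : ContDiff ℝ 1 (f t)) (a b : ℝ) :
    ∫ y in a..b, px f t y = f t b - f t a :=
  intervalIntegral.integral_deriv_eq_sub (fun _ _ => (hf.differentiable one_ne_zero).differentiableAt)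
    ((continuous_px hf).intervalIntegrable a b)

theorem hasDerivAt_intervalIntegral_pt (hf : ContDiff ℝ 1 (fun z : ℝ × ℝ => f z.1 z.2))
    (a b t₀ : ℝ) :
    HasDerivAt (fun t => ∫ y in a..b, f t y) (∫ y in a..b, pt f t₀ y) t₀ := by
  have hslice : ∀ t, Continuous (f t) := fun t => (contDiff_slice hf t).continuous
  -- a bound for `pt f` on a compact neighbourhood of `{t₀} ×ˢ [a, b]` dominates the integrands
  obtain ⟨C, hC⟩ := ((isCompact_closedBall t₀ 1).prod isCompact_uIcc).exists_bound_of_continuousOn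
    (continuous_pt hf).continuousOn (s := Metric.closedBall t₀ 1 ×ˢ uIcc a b)
  exact (intervalIntegral.hasDerivAt_integral_of_dominated_loc_of_deriv_le
    (bound := fun _ => C) (Metric.ball_mem_nhds t₀ one_pos)
    (Filter.Eventually.of_forall fun t => (hslice t).aestronglyMeasurable)
    ((hslice t₀).intervalIntegrable a b)
    (continuous_pt_apply hf t₀).aestronglyMeasurable
    (Filter.Eventually.of_forall fun y hy t ht =>
      hC (t, y) ⟨Metric.ball_subset_closedBall ht, uIoc_subset_uIcc hy⟩)
    intervalIntegrable_const
    (Filter.Eventually.of_forall fun y _ t _ =>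
      hasDerivAt_pt (hf.differentiable one_ne_zero (t, y)))).2

end PartialDerivatives

theorem sum_integral_px_eq_sum_jump {F : ℕ → ℝ → ℝ → ℝ} {M : ℕ} {t : ℝ}
    (hF : ∀ i < M, ContDiff ℝ 1 (F i t)) (x : ℕ → ℝ) :
    ∑ i ∈ Finset.range M, ∫ y in x i..x (i + 1), px (F i) t y
      = ∑ j ∈ Finset.Ico 1 M, (F (j - 1) t (x j) - F j t (x j))
        + F (M - 1) t (x M) - F 0 t (x 0) := by
  rw [← Finset.sum_range_sub_eq_sum_Ico_jump (fun i => F i t)]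
  exact Finset.sum_congr rfl fun i hi => integral_px (hF i (Finset.mem_range.1 hi)) _ _

theorem dg_semidiscrete_mass_conservation_general
    (M : ℕ) (xp : ℕ → ℝ)
    (hx0 : xp 0 = 0) (hxM : xp M = 1)
    (T : ℝ)
    (ρ v : ℕ → ℝ → ℝ → ℝ)  -- ρ i t x : cell i, time t, position x
    (hρ : ∀ i < M, ContDiff ℝ 1 (fun z : ℝ × ℝ => ρ i z.1 z.2))
    (hv : ∀ i < M, ContDiff ℝ 1 (fun z : ℝ × ℝ => v i z.1 z.2))
    -- boundary conditions
    (hbv : ∀ t ∈ Icc (0:ℝ) T, v 0 t 0 = 0 ∧ v (M - 1) t 1 = 0)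
    -- DG mass equation with central flux, tested with the constant 1
    (hDG : ∀ t ∈ Icc (0:ℝ) T,
      ∑ i ∈ Finset.range M, ∫ y in xp i..xp (i + 1),
          (pt (ρ i) t y + px (fun s z => ρ i s z * v i s z) t y)
        = ∑ j ∈ Finset.Ico 1 M,
            (ρ (j - 1) t (xp j) * v (j - 1) t (xp j)
              - ρ j t (xp j) * v j t (xp j))) :
    ∀ t ∈ Icc (0:ℝ) T,
      (∑ i ∈ Finset.range M, ∫ y in xp i..xp (i + 1), ρ i t y)
        = ∑ i ∈ Finset.range M, ∫ y in xp i..xp (i + 1), ρ i 0 y := by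
  have hmass : ∀ t, HasDerivAt (fun t => ∑ i ∈ Finset.range M, ∫ y in xp i..xp (i + 1), ρ i t y)
      (∑ i ∈ Finset.range M, ∫ y in xp i..xp (i + 1), pt (ρ i) t y) t := fun t =>
    HasDerivAt.fun_sum fun i hi => hasDerivAt_intervalIntegral_pt (hρ i (Finset.mem_range.1 hi)) _ _ t
  have hrate : ∀ t ∈ Icc (0:ℝ) T,
      ∑ i ∈ Finset.range M, ∫ y in xp i..xp (i + 1), pt (ρ i) t y = 0 := by
    intro t ht
    have hflux : ∀ i < M, ContDiff ℝ 1 (fun z => ρ i t z * v i t z) := fun i hi =>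
      (contDiff_slice (hρ i hi) t).mul (contDiff_slice (hv i hi) t)
    have hsplit : ∀ i ∈ Finset.range M,
        ∫ y in xp i..xp (i + 1), (pt (ρ i) t y + px (fun s z => ρ i s z * v i s z) t y)
          = (∫ y in xp i..xp (i + 1), pt (ρ i) t y)
            + ∫ y in xp i..xp (i + 1), px (fun s z => ρ i s z * v i s z) t y := fun i hi =>
      intervalIntegral.integral_add
        ((continuous_pt_apply (hρ i (Finset.mem_range.1 hi)) t).intervalIntegrable _ _)
        ((continuous_px (hflux i (Finset.mem_range.1 hi))).intervalIntegrable _ _)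
    have hbalance := hDG t ht
    rw [Finset.sum_congr rfl hsplit, Finset.sum_add_distrib,
      sum_integral_px_eq_sum_jump (F := fun i s z => ρ i s z * v i s z) hflux, hx0, hxM,
      (hbv t ht).1, (hbv t ht).2] at hbalance
    linarith
  intro t ht
  exact constant_of_has_deriv_right_zero (fun s _ => (hmass s).continuousAt.continuousWithinAt)
    (fun s hs => by simpa only [hrate s (Ico_subset_Icc_self hs)] using (hmass s).hasDerivWithinAt)
    t ht

/-- Mass conservation for the spatially semidiscrete DG scheme for the NSK
system on a partition `0 = x₀ < ⋯ < x_M = 1`: if on each cell the functions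
`ρᵢ, vᵢ` are `C¹`, the velocity vanishes at the boundary of `[0,1]`, and the DG
mass equation with central flux tested with `Ψ ≡ 1` holds for every
`t ∈ [0,T]`, then the total discrete mass `Σᵢ ∫ ρᵢ(t,·)` is constant on `[0,T]`. -/
theorem dg_semidiscrete_mass_conservation
    (M : ℕ) (hM : 1 ≤ M) (xp : ℕ → ℝ)
    (hx0 : xp 0 = 0) (hxM : xp M = 1)
    (hx : ∀ i < M, xp i < xp (i + 1))
    (T : ℝ) (hT : 0 < T)
    (ρ v : ℕ → ℝ → ℝ → ℝ)  -- ρ i t x : cell i, time t, position x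
    (hρ : ∀ i < M, ContDiff ℝ 1 (fun z : ℝ × ℝ => ρ i z.1 z.2))
    (hv : ∀ i < M, ContDiff ℝ 1 (fun z : ℝ × ℝ => v i z.1 z.2))
    -- boundary conditions
    (hbv : ∀ t ∈ Icc (0:ℝ) T, v 0 t 0 = 0 ∧ v (M - 1) t 1 = 0)
    -- DG mass equation with central flux, tested with the constant 1
    (hDG : ∀ t ∈ Icc (0:ℝ) T,
      ∑ i ∈ Finset.range M, ∫ y in xp i..xp (i + 1),
          (pt (ρ i) t y + px (fun s z => ρ i s z * v i s z) t y)
        = ∑ j ∈ Finset.Ico 1 M,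
            (ρ (j - 1) t (xp j) * v (j - 1) t (xp j)
              - ρ j t (xp j) * v j t (xp j))) :
    ∀ t ∈ Icc (0:ℝ) T,
      (∑ i ∈ Finset.range M, ∫ y in xp i..xp (i + 1), ρ i t y)
        = ∑ i ∈ Finset.range M, ∫ y in xp i..xp (i + 1), ρ i 0 y :=
  dg_semidiscrete_mass_conservation_general M xp hx0 hxM T ρ v hρ hv hbv hDG
end

section
/- Let γ > 0, μ ≥ 0, N ≥ 1, let k₀,…,k_{N−1} > 0 be time steps, and let W : ℝ → ℝ be continuous. For n = 0,…,N let ρⁿ, vⁿ, τⁿ, qⁿ : [0,1] → ℝ be twice continuously differentiable with vⁿ(0) = vⁿ(1) = 0 and qⁿ(0) = qⁿ(1) = 0. Write u^{n+½} := ½(uⁿ + u^{n+1}). Assume for each n = 0,…,N−1 the Crank–Nicolson-type equations hold pointwise on [0,1]: (a) (ρ^{n+1} − ρⁿ)/kₙ + ∂ₓ(ρ^{n+½} v^{n+½}) = 0; (b) ρ^{n+½}(v^{n+1} − vⁿ)/kₙ + ∂ₓ(ρ^{n+½}(v^{n+½})²) − ∂ₓ(ρ^{n+½}v^{n+½}) v^{n+½}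 + ρ^{n+½} ∂ₓτ^{n+½} − ½ ρ^{n+½} ∂ₓ((v^{n+½})²) − μ ∂ₓₓ v^{n+½} = 0; (c) W(ρ^{n+1}) − W(ρⁿ) = (ρ^{n+1} − ρⁿ) · ( τ^{n+½} + γ ∂ₓ q^{n+½} − ¼((v^{n+1})² + (vⁿ)²) ); (d) q^{n+1} = ∂ₓρ^{n+1}; and additionally q⁰ = ∂ₓρ⁰. Then for every n = 0,…,N: ∫₀¹ [ W(ρⁿ) + ½ρⁿ(vⁿ)² + (γ/2)(qⁿ)² ] dx = ∫₀¹ [ W(ρ⁰) + ½ρ⁰(v⁰)² + (γ/2)(q⁰)² ] dx − μ Σ_{j=0}^{n−1} kⱼ ∫₀¹ (∂ₓ v^{j+½})² dx. In particular for μ = 0 the discrete energy is exactly conserved, and for μ > 0 it is monotonically dissipated, with all dissipation due to viscosity. -/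
/-!
The scheme is built so that the energy argument of the continuous problem survives time
discretisation. Test the mass equation (a) with `τ^{n+½}` and the momentum equation (b) with
`v^{n+½}`: the convective terms of (b) are in skew-symmetric form and cancel, and the
difference-quotient form (c) of the chemical potential, together with `q = ∂ₓρ`, plays the role of
the chain rule for `W(ρ) + ½ρv² + (γ/2)q²`. The increment of the energy density over one step is
then the `x`-derivative of a flux vanishing at `x = 0, 1`, minus `μ kₙ (∂ₓ v^{n+½})²`. Integrating
over `[0,1]` and summing over the steps gives the balance.
-/

open Set MeasureTheory

noncomputable section

/-- The Crank–Nicolson midpoint `u^{n+½}` of `f = uⁿ` and `g = u^{n+1}`. -/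
def mid (f g : ℝ → ℝ) : ℝ → ℝ := fun y => (f y + g y) / 2

def energyDensity (W : ℝ → ℝ) (γ : ℝ) (ρ v q : ℝ → ℝ) (x : ℝ) : ℝ :=
  W (ρ x) + 1 / 2 * ρ x * v x ^ 2 + γ / 2 * q x ^ 2

def energy (W : ℝ → ℝ) (γ : ℝ) (ρ v q : ℝ → ℝ) : ℝ :=
  ∫ x in (0:ℝ)..1, energyDensity W γ ρ v q x

/-- The energy flux of one time step, in terms of the midpoint fields `ρ, v, τ, q` and the
density increment `δ = ρ^{n+1} − ρⁿ`. -/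
def energyFlux (k μ γ : ℝ) (ρ v τ q δ : ℝ → ℝ) (y : ℝ) : ℝ :=
  -k * (ρ y * v y * τ y) + μ * k * (v y * deriv v y) + γ * (q y * δ y)

end

@[simp]
theorem mid_apply (f g : ℝ → ℝ) (x : ℝ) : mid f g x = (f x + g x) / 2 := rfl

theorem DifferentiableAt.mid {f g : ℝ → ℝ} {x : ℝ} (hf : DifferentiableAt ℝ f x)
    (hg : DifferentiableAt ℝ g x) : DifferentiableAt ℝ (mid f g) x :=
  (hf.add hg).div_const 2

theorem ContDiff.mid {n : WithTop ℕ∞} {f g : ℝ → ℝ} (hf : ContDiff ℝ n f) (hg : ContDiff ℝ n g) :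
    ContDiff ℝ n (mid f g) :=
  (hf.add hg).div_const 2

theorem continuous_energyDensity {W ρ v q : ℝ → ℝ} (γ : ℝ) (hW : Continuous W)
    (hρ : Continuous ρ) (hv : Continuous v) (hq : Continuous q) :
    Continuous (energyDensity W γ ρ v q) := by
  unfold energyDensity
  fun_prop

theorem integral_sub_integral_eq_of_eqOn_deriv {a b c : ℝ} {f₀ f₁ F g : ℝ → ℝ}
    (hf₀ : Continuous f₀) (hf₁ : Continuous f₁) (hF : ContDiff ℝ 1 F) (hg : Continuous g)
    (h : EqOn (fun x => f₁ x - f₀ x) (fun x => deriv F x - c * g x) (uIcc a b)) :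
    (∫ x in a..b, f₁ x) - ∫ x in a..b, f₀ x = F b - F a - c * ∫ x in a..b, g x := by
  have hF' : IntervalIntegrable (deriv F) volume a b :=
    (hF.continuous_deriv le_rfl).intervalIntegrable a b
  rw [← intervalIntegral.integral_sub (hf₁.intervalIntegrable a b) (hf₀.intervalIntegrable a b),
    intervalIntegral.integral_congr h,
    intervalIntegral.integral_sub hF' ((hg.const_mul c).intervalIntegrable a b),
    intervalIntegral.integral_const_mul,
    intervalIntegral.integral_deriv_eq_sub (fun x _ => hF.differentiable one_ne_zero x) hF']

theorem skew_convection_eq_zero {ρ v : ℝ → ℝ} {x : ℝ} (hρ : DifferentiableAt ℝ ρ x)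
    (hv : DifferentiableAt ℝ v x) :
    deriv (fun y => ρ y * v y ^ 2) x - deriv (fun y => ρ y * v y) x * v x
      - 1 / 2 * ρ x * deriv (fun y => v y ^ 2) x = 0 := by
  rw [deriv_fun_mul hρ (hv.fun_pow 2), deriv_fun_mul hρ hv, deriv_fun_pow hv]
  ring

theorem hasDerivAt_energyFlux {k μ γ x : ℝ} {ρ v τ q δ : ℝ → ℝ} (hρ : DifferentiableAt ℝ ρ x)
    (hv : DifferentiableAt ℝ v x) (hv' : DifferentiableAt ℝ (deriv v) x)
    (hτ : DifferentiableAt ℝ τ x) (hq : DifferentiableAt ℝ q x) (hδ : DifferentiableAt ℝ δ x) :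
    HasDerivAt (energyFlux k μ γ ρ v τ q δ)
      (-k * (deriv (fun y => ρ y * v y) x * τ x + ρ x * v x * deriv τ x)
        + μ * k * (deriv v x ^ 2 + v x * deriv (deriv v) x)
        + γ * (deriv q x * δ x + q x * deriv δ x)) x := by
  have h := ((((hρ.fun_mul hv).hasDerivAt.fun_mul hτ.hasDerivAt).const_mul (-k)).fun_add
    ((hv.hasDerivAt.fun_mul hv'.hasDerivAt).const_mul (μ * k))).fun_add
    ((hq.hasDerivAt.fun_mul hδ.hasDerivAt).const_mul γ)
  exact h.congr_deriv (by ring)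

theorem contDiff_energyFlux {k μ γ : ℝ} {ρ v τ q δ : ℝ → ℝ} (hρ : ContDiff ℝ 1 ρ)
    (hv : ContDiff ℝ 2 v) (hτ : ContDiff ℝ 1 τ) (hq : ContDiff ℝ 1 q) (hδ : ContDiff ℝ 1 δ) :
    ContDiff ℝ 1 (energyFlux k μ γ ρ v τ q δ) := by
  have hv₁ : ContDiff ℝ 1 v := hv.of_le one_le_two
  have hv' : ContDiff ℝ 1 (deriv v) := hv.deriv'
  unfold energyFlux
  fun_prop

theorem energyFlux_eq_zero {k μ γ a : ℝ} {ρ v τ q δ : ℝ → ℝ} (hv : v a = 0) (hq : q a = 0) :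
    energyFlux k μ γ ρ v τ q δ a = 0 := by
  simp [energyFlux, hv, hq]

section Step

variable {k μ γ : ℝ} {W ρ₀ ρ₁ v₀ v₁ τ₀ τ₁ q₀ q₁ : ℝ → ℝ}

theorem energyDensity_sub_energyDensity {c x : ℝ}
    (hc : W (ρ₁ x) - W (ρ₀ x) = (ρ₁ x - ρ₀ x) * (c - 1 / 4 * (v₁ x ^ 2 + v₀ x ^ 2))) :
    energyDensity W γ ρ₁ v₁ q₁ x - energyDensity W γ ρ₀ v₀ q₀ x
      = (ρ₁ x - ρ₀ x) * c + mid ρ₀ ρ₁ x * (v₁ x - v₀ x) * mid v₀ v₁ x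
        + γ * mid q₀ q₁ x * (q₁ x - q₀ x) := by
  simp only [energyDensity, mid_apply]
  linear_combination hc

theorem energyDensity_sub_eq_deriv_energyFlux (hk : k ≠ 0) {x : ℝ}
    (hρ₀ : DifferentiableAt ℝ ρ₀ x) (hρ₁ : DifferentiableAt ℝ ρ₁ x)
    (hv₀ : DifferentiableAt ℝ v₀ x) (hv₁ : DifferentiableAt ℝ v₁ x)
    (hv' : DifferentiableAt ℝ (deriv (mid v₀ v₁)) x)
    (hτ : DifferentiableAt ℝ (mid τ₀ τ₁) x) (hq : DifferentiableAt ℝ (mid q₀ q₁) x)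
    (ha : (ρ₁ x - ρ₀ x) / k + deriv (fun y => mid ρ₀ ρ₁ y * mid v₀ v₁ y) x = 0)
    (hb : mid ρ₀ ρ₁ x * ((v₁ x - v₀ x) / k)
        + deriv (fun y => mid ρ₀ ρ₁ y * mid v₀ v₁ y ^ 2) x
        - deriv (fun y => mid ρ₀ ρ₁ y * mid v₀ v₁ y) x * mid v₀ v₁ x
        + mid ρ₀ ρ₁ x * deriv (mid τ₀ τ₁) x
        - 1 / 2 * mid ρ₀ ρ₁ x * deriv (fun y => mid v₀ v₁ y ^ 2) x
        - μ * deriv (deriv (mid v₀ v₁)) x = 0)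
    (hc : W (ρ₁ x) - W (ρ₀ x) = (ρ₁ x - ρ₀ x)
        * (mid τ₀ τ₁ x + γ * deriv (mid q₀ q₁) x - 1 / 4 * (v₁ x ^ 2 + v₀ x ^ 2)))
    (hd₀ : q₀ x = deriv ρ₀ x) (hd₁ : q₁ x = deriv ρ₁ x) :
    energyDensity W γ ρ₁ v₁ q₁ x - energyDensity W γ ρ₀ v₀ q₀ x
      = deriv (energyFlux k μ γ (mid ρ₀ ρ₁) (mid v₀ v₁) (mid τ₀ τ₁) (mid q₀ q₁) (ρ₁ - ρ₀)) x
        - μ * k * deriv (mid v₀ v₁) x ^ 2 := by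
  have hr := hρ₀.mid hρ₁
  have hw := hv₀.mid hv₁
  have hmass : ρ₁ x - ρ₀ x = -k * deriv (fun y => mid ρ₀ ρ₁ y * mid v₀ v₁ y) x := by
    field_simp at ha
    linear_combination ha
  have hmomentum : mid ρ₀ ρ₁ x * (v₁ x - v₀ x)
      = -k * (mid ρ₀ ρ₁ x * deriv (mid τ₀ τ₁) x - μ * deriv (deriv (mid v₀ v₁)) x) := by
    have hconv := skew_convection_eq_zero hr hw
    field_simp at hb
    linear_combination hb / 2 - k * hconv
  have hgrad : deriv (ρ₁ - ρ₀) x = q₁ x - q₀ x := by rw [deriv_sub hρ₁ hρ₀, hd₀, hd₁]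
  rw [energyDensity_sub_energyDensity hc,
    (hasDerivAt_energyFlux hr hw hv' hτ hq (hρ₁.sub hρ₀)).deriv, hgrad, Pi.sub_apply]
  linear_combination mid τ₀ τ₁ x * hmass + mid v₀ v₁ x * hmomentum

theorem energy_step (hk : k ≠ 0) (hW : Continuous W)
    (hρ₀ : ContDiff ℝ 1 ρ₀) (hρ₁ : ContDiff ℝ 1 ρ₁) (hv₀ : ContDiff ℝ 2 v₀) (hv₁ : ContDiff ℝ 2 v₁)
    (hτ₀ : ContDiff ℝ 1 τ₀) (hτ₁ : ContDiff ℝ 1 τ₁) (hq₀ : ContDiff ℝ 1 q₀) (hq₁ : ContDiff ℝ 1 q₁)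
    (hbv₀ : v₀ 0 = 0 ∧ v₀ 1 = 0) (hbv₁ : v₁ 0 = 0 ∧ v₁ 1 = 0)
    (hbq₀ : q₀ 0 = 0 ∧ q₀ 1 = 0) (hbq₁ : q₁ 0 = 0 ∧ q₁ 1 = 0)
    (ha : ∀ x ∈ Icc (0:ℝ) 1,
      (ρ₁ x - ρ₀ x) / k + deriv (fun y => mid ρ₀ ρ₁ y * mid v₀ v₁ y) x = 0)
    (hb : ∀ x ∈ Icc (0:ℝ) 1, mid ρ₀ ρ₁ x * ((v₁ x - v₀ x) / k)
        + deriv (fun y => mid ρ₀ ρ₁ y * mid v₀ v₁ y ^ 2) x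
        - deriv (fun y => mid ρ₀ ρ₁ y * mid v₀ v₁ y) x * mid v₀ v₁ x
        + mid ρ₀ ρ₁ x * deriv (mid τ₀ τ₁) x
        - 1 / 2 * mid ρ₀ ρ₁ x * deriv (fun y => mid v₀ v₁ y ^ 2) x
        - μ * deriv (deriv (mid v₀ v₁)) x = 0)
    (hc : ∀ x ∈ Icc (0:ℝ) 1, W (ρ₁ x) - W (ρ₀ x) = (ρ₁ x - ρ₀ x)
        * (mid τ₀ τ₁ x + γ * deriv (mid q₀ q₁) x - 1 / 4 * (v₁ x ^ 2 + v₀ x ^ 2)))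
    (hd₀ : ∀ x ∈ Icc (0:ℝ) 1, q₀ x = deriv ρ₀ x) (hd₁ : ∀ x ∈ Icc (0:ℝ) 1, q₁ x = deriv ρ₁ x) :
    energy W γ ρ₁ v₁ q₁
      = energy W γ ρ₀ v₀ q₀ - μ * (k * ∫ x in (0:ℝ)..1, deriv (mid v₀ v₁) x ^ 2) := by
  have hv' : ContDiff ℝ 1 (deriv (mid v₀ v₁)) := (hv₀.mid hv₁).deriv'
  have hbalance := integral_sub_integral_eq_of_eqOn_deriv (c := μ * k)
    (g := fun x => deriv (mid v₀ v₁) x ^ 2)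
    (continuous_energyDensity γ hW hρ₀.continuous hv₀.continuous hq₀.continuous)
    (continuous_energyDensity γ hW hρ₁.continuous hv₁.continuous hq₁.continuous)
    (contDiff_energyFlux (k := k) (μ := μ) (γ := γ) (hρ₀.mid hρ₁) (hv₀.mid hv₁) (hτ₀.mid hτ₁)
      (hq₀.mid hq₁) (hρ₁.sub hρ₀))
    (hv'.continuous.pow 2) fun x hx => by
      rw [uIcc_of_le zero_le_one] at hx
      have hdiff {f : ℝ → ℝ} (hf : ContDiff ℝ 1 f) : DifferentiableAt ℝ f x :=
        hf.differentiable one_ne_zero x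
      exact energyDensity_sub_eq_deriv_energyFlux hk (hdiff hρ₀) (hdiff hρ₁)
        (hdiff (hv₀.of_le one_le_two)) (hdiff (hv₁.of_le one_le_two)) (hdiff hv')
        (hdiff (hτ₀.mid hτ₁)) (hdiff (hq₀.mid hq₁)) (ha x hx) (hb x hx) (hc x hx) (hd₀ x hx)
        (hd₁ x hx)
  rw [energyFlux_eq_zero (a := 0) (by simp [hbv₀.1, hbv₁.1]) (by simp [hbq₀.1, hbq₁.1]),
    energyFlux_eq_zero (a := 1) (by simp [hbv₀.2, hbv₁.2]) (by simp [hbq₀.2, hbq₁.2])] at hbalance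
  unfold energy
  linarith

end Step

theorem time_discrete_energy_dissipation_general
    (γ μ : ℝ)
    (N : ℕ) (k : ℕ → ℝ) (hk : ∀ n < N, 0 < k n)
    (W : ℝ → ℝ) (hW : Continuous W)
    (ρ v τ q : ℕ → ℝ → ℝ)
    (hρ : ∀ n ≤ N, ContDiff ℝ 2 (ρ n))
    (hv : ∀ n ≤ N, ContDiff ℝ 2 (v n))
    (hτ : ∀ n ≤ N, ContDiff ℝ 2 (τ n))
    (hq : ∀ n ≤ N, ContDiff ℝ 2 (q n))
    -- boundary conditions
    (hbv : ∀ n ≤ N, v n 0 = 0 ∧ v n 1 = 0)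
    (hbq : ∀ n ≤ N, q n 0 = 0 ∧ q n 1 = 0)
    -- (a) discrete mass equation
    (ha : ∀ n < N, ∀ x ∈ Icc (0:ℝ) 1,
      (ρ (n + 1) x - ρ n x) / k n
        + deriv (fun y => ((ρ n y + ρ (n + 1) y) / 2)
            * ((v n y + v (n + 1) y) / 2)) x = 0)
    -- (b) discrete momentum equation
    (hb : ∀ n < N, ∀ x ∈ Icc (0:ℝ) 1,
      ((ρ n x + ρ (n + 1) x) / 2) * ((v (n + 1) x - v n x) / k n)
        + deriv (fun y => ((ρ n y + ρ (n + 1) y) / 2)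
            * ((v n y + v (n + 1) y) / 2) ^ 2) x
        - deriv (fun y => ((ρ n y + ρ (n + 1) y) / 2)
            * ((v n y + v (n + 1) y) / 2)) x * ((v n x + v (n + 1) x) / 2)
        + ((ρ n x + ρ (n + 1) x) / 2)
            * deriv (fun y => (τ n y + τ (n + 1) y) / 2) x
        - (1/2) * ((ρ n x + ρ (n + 1) x) / 2)
            * deriv (fun y => ((v n y + v (n + 1) y) / 2) ^ 2) x
        - μ * deriv (deriv (fun y => (v n y + v (n + 1) y) / 2)) x = 0)
    -- (c) discrete chemical-potential equation (multiplied-out form)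
    (hc : ∀ n < N, ∀ x ∈ Icc (0:ℝ) 1,
      W (ρ (n + 1) x) - W (ρ n x)
        = (ρ (n + 1) x - ρ n x)
          * ((τ n x + τ (n + 1) x) / 2
              + γ * deriv (fun y => (q n y + q (n + 1) y) / 2) x
              - (1/4) * ((v (n + 1) x) ^ 2 + (v n x) ^ 2)))
    -- (d) gradient equation, and its validity at the initial level
    (hd : ∀ n < N, ∀ x ∈ Icc (0:ℝ) 1, q (n + 1) x = deriv (ρ (n + 1)) x)
    (hq0 : ∀ x ∈ Icc (0:ℝ) 1, q 0 x = deriv (ρ 0) x) :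
    ∀ n ≤ N,
      (∫ x in (0:ℝ)..1,
          (W (ρ n x) + (1/2) * ρ n x * (v n x) ^ 2 + (γ/2) * (q n x) ^ 2))
        = (∫ x in (0:ℝ)..1,
            (W (ρ 0 x) + (1/2) * ρ 0 x * (v 0 x) ^ 2 + (γ/2) * (q 0 x) ^ 2))
          - μ * ∑ j ∈ Finset.range n,
              k j * ∫ x in (0:ℝ)..1,
                (deriv (fun y => (v j y + v (j + 1) y) / 2) x) ^ 2 := by
  intro n hn
  have hgrad : ∀ j ≤ N, ∀ x ∈ Icc (0:ℝ) 1, q j x = deriv (ρ j) x := by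
    rintro (_ | j) hj
    exacts [hq0, hd j hj]
  have hC1 {f : ℝ → ℝ} (hf : ContDiff ℝ 2 f) : ContDiff ℝ 1 f := hf.of_le one_le_two
  have hstep (j : ℕ) (hj : j < N) : energy W γ (ρ (j + 1)) (v (j + 1)) (q (j + 1))
      = energy W γ (ρ j) (v j) (q j)
        - μ * (k j * ∫ x in (0:ℝ)..1, deriv (mid (v j) (v (j + 1))) x ^ 2) :=
    energy_step (hk j hj).ne' hW (hC1 (hρ j hj.le)) (hC1 (hρ (j + 1) hj)) (hv j hj.le)
      (hv (j + 1) hj) (hC1 (hτ j hj.le)) (hC1 (hτ (j + 1) hj)) (hC1 (hq j hj.le))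
      (hC1 (hq (j + 1) hj)) (hbv j hj.le) (hbv (j + 1) hj) (hbq j hj.le) (hbq (j + 1) hj)
      (ha j hj) (hb j hj) (hc j hj) (hgrad j hj.le) (hd j hj)
  induction n with
  | zero => simp
  | succ m ih =>
    rw [Finset.sum_range_succ, mul_add, ← sub_sub, ← ih (by omega)]
    exact hstep m (by omega)

/-- Discrete energy balance for the Crank–Nicolson-type temporally discrete,
spatially continuous scheme for the mixed formulation of the 1D NSK system on
`[0,1]`: the discrete energy at level `n` equals the initial energy minus the
accumulated viscous dissipation `μ Σⱼ kⱼ ∫ (∂ₓ v^{j+½})²`. In particular for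
`μ = 0` the energy is exactly conserved, and for `μ > 0` it is monotonically
dissipated, all dissipation being due to viscosity. -/
theorem time_discrete_energy_dissipation
    (γ μ : ℝ) (hγ : 0 < γ) (hμ : 0 ≤ μ)
    (N : ℕ) (hN : 1 ≤ N) (k : ℕ → ℝ) (hk : ∀ n < N, 0 < k n)
    (W : ℝ → ℝ) (hW : Continuous W)
    (ρ v τ q : ℕ → ℝ → ℝ)
    (hρ : ∀ n ≤ N, ContDiff ℝ 2 (ρ n))
    (hv : ∀ n ≤ N, ContDiff ℝ 2 (v n))
    (hτ : ∀ n ≤ N, ContDiff ℝ 2 (τ n))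
    (hq : ∀ n ≤ N, ContDiff ℝ 2 (q n))
    -- boundary conditions
    (hbv : ∀ n ≤ N, v n 0 = 0 ∧ v n 1 = 0)
    (hbq : ∀ n ≤ N, q n 0 = 0 ∧ q n 1 = 0)
    -- (a) discrete mass equation
    (ha : ∀ n < N, ∀ x ∈ Icc (0:ℝ) 1,
      (ρ (n + 1) x - ρ n x) / k n
        + deriv (fun y => ((ρ n y + ρ (n + 1) y) / 2)
            * ((v n y + v (n + 1) y) / 2)) x = 0)
    -- (b) discrete momentum equation
    (hb : ∀ n < N, ∀ x ∈ Icc (0:ℝ) 1,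
      ((ρ n x + ρ (n + 1) x) / 2) * ((v (n + 1) x - v n x) / k n)
        + deriv (fun y => ((ρ n y + ρ (n + 1) y) / 2)
            * ((v n y + v (n + 1) y) / 2) ^ 2) x
        - deriv (fun y => ((ρ n y + ρ (n + 1) y) / 2)
            * ((v n y + v (n + 1) y) / 2)) x * ((v n x + v (n + 1) x) / 2)
        + ((ρ n x + ρ (n + 1) x) / 2)
            * deriv (fun y => (τ n y + τ (n + 1) y) / 2) x
        - (1/2) * ((ρ n x + ρ (n + 1) x) / 2)
            * deriv (fun y => ((v n y + v (n + 1) y) / 2) ^ 2) x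
        - μ * deriv (deriv (fun y => (v n y + v (n + 1) y) / 2)) x = 0)
    -- (c) discrete chemical-potential equation (multiplied-out form)
    (hc : ∀ n < N, ∀ x ∈ Icc (0:ℝ) 1,
      W (ρ (n + 1) x) - W (ρ n x)
        = (ρ (n + 1) x - ρ n x)
          * ((τ n x + τ (n + 1) x) / 2
              + γ * deriv (fun y => (q n y + q (n + 1) y) / 2) x
              - (1/4) * ((v (n + 1) x) ^ 2 + (v n x) ^ 2)))
    -- (d) gradient equation, and its validity at the initial level
    (hd : ∀ n < N, ∀ x ∈ Icc (0:ℝ) 1, q (n + 1) x = deriv (ρ (n + 1)) x)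
    (hq0 : ∀ x ∈ Icc (0:ℝ) 1, q 0 x = deriv (ρ 0) x) :
    ∀ n ≤ N,
      (∫ x in (0:ℝ)..1,
          (W (ρ n x) + (1/2) * ρ n x * (v n x) ^ 2 + (γ/2) * (q n x) ^ 2))
        = (∫ x in (0:ℝ)..1,
            (W (ρ 0 x) + (1/2) * ρ 0 x * (v 0 x) ^ 2 + (γ/2) * (q 0 x) ^ 2))
          - μ * ∑ j ∈ Finset.range n,
              k j * ∫ x in (0:ℝ)..1,
                (deriv (fun y => (v j y + v (j + 1) y) / 2) x) ^ 2 :=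
  time_discrete_energy_dissipation_general γ μ N k hk W hW ρ v τ q hρ hv hτ hq hbv hbq ha hb hc hd
    hq0
end

section
/- Let M ≥ 1, let 0 = x₀ < ⋯ < x_M = 1 be a partition of [0,1], N ≥ 1, k₀,…,k_{N−1} > 0. For each time level n = 0,…,N and cell i ∈ {0,…,M−1} let ρⁿᵢ, vⁿᵢ : [xᵢ, xᵢ₊₁] → ℝ be continuously differentiable, with vⁿ₀(0) = 0 and vⁿ_{M−1}(1) = 0 for all n. Write uⁿ⁺½ᵢ := ½(uⁿᵢ + u^{n+1}ᵢ). Assume for each n = 0,…,N−1 the fully discrete DG mass equation tested with the constant 1 holds: Σᵢ ∫_{xᵢ}^{xᵢ₊₁} [ (ρ^{n+1}ᵢ − ρⁿᵢ)/kₙ + ∂ₓ( ρⁿ⁺½ᵢ vⁿ⁺½ᵢ ) ] dx = Σ_{j=1}^{M−1} [ρ^{n+½} v^{n+½}]ⱼ, where [ρ^{n+½} v^{n+½}]ⱼ := (ρⁿ⁺½_{j−1} vⁿ⁺½_{j−1})(xⱼ) − (ρⁿ⁺½ⱼ vⁿ⁺½ⱼ)(xⱼ). Then the total discrete mass is conserved: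 Σᵢ ∫_{xᵢ}^{xᵢ₊₁} ρⁿᵢ dx = Σᵢ ∫_{xᵢ}^{xᵢ₊₁} ρ⁰ᵢ dx for every n = 0,…,N. -/
open MeasureTheory

/-!
Integrating the DG mass equation over each cell, the fundamental theorem of calculus turns the
flux derivative into the difference of the cell-boundary values of the half-step flux
`ρ^{n+½} v^{n+½}`. Summed over the cells these values telescope into the interface jumps, which
cancel the central-flux right-hand side, plus the two values at `x = 0` and `x = 1`, which vanish
because the velocity does. What remains is `(mass^{n+1} - mass^n) / kₙ = 0`.
-/

theorem Finset.sum_range_sub_eq_boundary_add_sum_Ico_jump {G : Type*} [AddCommGroup G]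
    {M : ℕ} (hM : 1 ≤ M) (f : ℕ → ℕ → G) :
    ∑ i ∈ Finset.range M, (f i (i + 1) - f i i)
      = (f (M - 1) M - f 0 0) + ∑ j ∈ Finset.Ico 1 M, (f (j - 1) j - f j j) := by
  have h_right : ∑ i ∈ Finset.range M, f i (i + 1)
      = (∑ j ∈ Finset.Ico 1 M, f (j - 1) j) + f (M - 1) M := by
    rw [← Finset.sum_Ico_succ_top hM, Finset.sum_Ico_eq_sum_range]
    refine Finset.sum_congr (by simp) fun i _ => ?_
    rw [Nat.add_comm 1 i, Nat.add_sub_cancel]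
  have h_left : ∑ i ∈ Finset.range M, f i i = f 0 0 + ∑ j ∈ Finset.Ico 1 M, f j j := by
    rw [Finset.range_eq_Ico, Finset.sum_eq_sum_Ico_succ_bot hM]
  rw [Finset.sum_sub_distrib, h_right, h_left, Finset.sum_sub_distrib]
  abel

theorem ContDiff.integral_deriv_eq_sub {f : ℝ → ℝ} (hf : ContDiff ℝ 1 f) (a b : ℝ) :
    ∫ y in a..b, deriv f y = f b - f a :=
  intervalIntegral.integral_deriv_eq_sub
    (fun _ _ => (hf.differentiable one_ne_zero).differentiableAt)
    ((hf.continuous_deriv le_rfl).intervalIntegrable _ _)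

theorem integral_div_sub_add_deriv_eq {u w g : ℝ → ℝ} (hu : Continuous u) (hw : Continuous w)
    (hg : ContDiff ℝ 1 g) (k a b : ℝ) :
    ∫ y in a..b, ((u y - w y) / k + deriv g y)
      = ((∫ y in a..b, u y) - ∫ y in a..b, w y) / k + (g b - g a) := by
  have hquot : IntervalIntegrable (fun y => (u y - w y) / k) volume a b :=
    ((hu.sub hw).div_const k).intervalIntegrable a b
  rw [intervalIntegral.integral_add hquot
      ((hg.continuous_deriv le_rfl).intervalIntegrable a b),
    intervalIntegral.integral_div,
    intervalIntegral.integral_sub (hu.intervalIntegrable a b) (hw.intervalIntegrable a b),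
    hg.integral_deriv_eq_sub]

theorem sum_integral_eq_of_sum_integral_eq_sum_jump {M : ℕ} (hM : 1 ≤ M) {xp : ℕ → ℝ} {k : ℝ}
    (hk : k ≠ 0) {u w g : ℕ → ℝ → ℝ} (hu : ∀ i < M, Continuous (u i))
    (hw : ∀ i < M, Continuous (w i)) (hg : ∀ i < M, ContDiff ℝ 1 (g i))
    (hg_left : g 0 (xp 0) = 0) (hg_right : g (M - 1) (xp M) = 0)
    (hscheme : ∑ i ∈ Finset.range M, ∫ y in xp i..xp (i + 1), ((u i y - w i y) / k + deriv (g i) y)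
      = ∑ j ∈ Finset.Ico 1 M, (g (j - 1) (xp j) - g j (xp j))) :
    ∑ i ∈ Finset.range M, ∫ y in xp i..xp (i + 1), u i y
      = ∑ i ∈ Finset.range M, ∫ y in xp i..xp (i + 1), w i y := by
  have hcells : ∑ i ∈ Finset.range M,
        ∫ y in xp i..xp (i + 1), ((u i y - w i y) / k + deriv (g i) y)
      = ((∑ i ∈ Finset.range M, ∫ y in xp i..xp (i + 1), u i y)
          - ∑ i ∈ Finset.range M, ∫ y in xp i..xp (i + 1), w i y) / k
        + ∑ i ∈ Finset.range M, (g i (xp (i + 1)) - g i (xp i)) := by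
    rw [← Finset.sum_sub_distrib, Finset.sum_div, ← Finset.sum_add_distrib]
    refine Finset.sum_congr rfl fun i hi => ?_
    rw [Finset.mem_range] at hi
    exact integral_div_sub_add_deriv_eq (hu i hi) (hw i hi) (hg i hi) k _ _
  have hflux : ∑ i ∈ Finset.range M, (g i (xp (i + 1)) - g i (xp i))
      = ∑ j ∈ Finset.Ico 1 M, (g (j - 1) (xp j) - g j (xp j)) := by
    rw [Finset.sum_range_sub_eq_boundary_add_sum_Ico_jump hM (fun i j => g i (xp j)),
      hg_left, hg_right, sub_zero, zero_add]
  rw [hcells, hflux, add_eq_right, div_eq_zero_iff, sub_eq_zero] at hscheme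
  exact hscheme.resolve_right hk

theorem dg_fully_discrete_mass_conservation_general
    (M : ℕ) (hM : 1 ≤ M) (xp : ℕ → ℝ)
    (hx0 : xp 0 = 0) (hxM : xp M = 1)
    (N : ℕ) (k : ℕ → ℝ) (hk : ∀ n < N, 0 < k n)
    (ρ v : ℕ → ℕ → ℝ → ℝ)  -- time level, cell index, position
    (hρ : ∀ n ≤ N, ∀ i < M, ContDiff ℝ 1 (ρ n i))
    (hv : ∀ n ≤ N, ∀ i < M, ContDiff ℝ 1 (v n i))
    -- boundary conditions
    (hbv : ∀ n ≤ N, v n 0 0 = 0 ∧ v n (M - 1) 1 = 0)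
    -- fully discrete DG mass equation tested with the constant 1
    (hDG : ∀ n < N,
      ∑ i ∈ Finset.range M, ∫ y in xp i..xp (i + 1),
          ((ρ (n + 1) i y - ρ n i y) / k n
            + deriv (fun z => ((ρ n i z + ρ (n + 1) i z) / 2)
                * ((v n i z + v (n + 1) i z) / 2)) y)
        = ∑ j ∈ Finset.Ico 1 M,
            (((ρ n (j - 1) (xp j) + ρ (n + 1) (j - 1) (xp j)) / 2)
                * ((v n (j - 1) (xp j) + v (n + 1) (j - 1) (xp j)) / 2)
              - ((ρ n j (xp j) + ρ (n + 1) j (xp j)) / 2)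
                * ((v n j (xp j) + v (n + 1) j (xp j)) / 2))) :
    ∀ n ≤ N,
      (∑ i ∈ Finset.range M, ∫ y in xp i..xp (i + 1), ρ n i y)
        = ∑ i ∈ Finset.range M, ∫ y in xp i..xp (i + 1), ρ 0 i y := by
  have step : ∀ n < N,
      (∑ i ∈ Finset.range M, ∫ y in xp i..xp (i + 1), ρ (n + 1) i y)
        = ∑ i ∈ Finset.range M, ∫ y in xp i..xp (i + 1), ρ n i y := by
    intro n hn
    have hn' : n ≤ N := hn.le
    refine sum_integral_eq_of_sum_integral_eq_sum_jump hM (hk n hn).ne'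
      (fun i hi => (hρ (n + 1) hn i hi).continuous) (fun i hi => (hρ n hn' i hi).continuous)
      (fun i hi => (((hρ n hn' i hi).add (hρ (n + 1) hn i hi)).div_const 2).mul
        (((hv n hn' i hi).add (hv (n + 1) hn i hi)).div_const 2))
      ?_ ?_ (hDG n hn)
    · simp [hx0, (hbv n hn').1, (hbv (n + 1) hn).1]
    · simp [hxM, (hbv n hn').2, (hbv (n + 1) hn).2]
  intro n hn
  induction n with
  | zero => rfl
  | succ m ih => rw [step m hn, ih (by omega)]

/-- Mass conservation for the fully discrete (Crank–Nicolson in time, DG in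
space) scheme for the NSK system on a partition `0 = x₀ < ⋯ < x_M = 1`: if at
each time level the cellwise functions are `C¹`, the velocity vanishes at the
boundary of `[0,1]`, and the fully discrete DG mass equation with central flux
at the half-step values, tested with `Ψ ≡ 1`, holds for each `n < N`, then the
total discrete mass `Σᵢ ∫ ρⁿᵢ` is the same at every time level `n ≤ N`. -/
theorem dg_fully_discrete_mass_conservation
    (M : ℕ) (hM : 1 ≤ M) (xp : ℕ → ℝ)
    (hx0 : xp 0 = 0) (hxM : xp M = 1)
    (hx : ∀ i < M, xp i < xp (i + 1))
    (N : ℕ) (hN : 1 ≤ N) (k : ℕ → ℝ) (hk : ∀ n < N, 0 < k n)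
    (ρ v : ℕ → ℕ → ℝ → ℝ)  -- time level, cell index, position
    (hρ : ∀ n ≤ N, ∀ i < M, ContDiff ℝ 1 (ρ n i))
    (hv : ∀ n ≤ N, ∀ i < M, ContDiff ℝ 1 (v n i))
    -- boundary conditions
    (hbv : ∀ n ≤ N, v n 0 0 = 0 ∧ v n (M - 1) 1 = 0)
    -- fully discrete DG mass equation tested with the constant 1
    (hDG : ∀ n < N,
      ∑ i ∈ Finset.range M, ∫ y in xp i..xp (i + 1),
          ((ρ (n + 1) i y - ρ n i y) / k n
            + deriv (fun z => ((ρ n i z + ρ (n + 1) i z) / 2)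
                * ((v n i z + v (n + 1) i z) / 2)) y)
        = ∑ j ∈ Finset.Ico 1 M,
            (((ρ n (j - 1) (xp j) + ρ (n + 1) (j - 1) (xp j)) / 2)
                * ((v n (j - 1) (xp j) + v (n + 1) (j - 1) (xp j)) / 2)
              - ((ρ n j (xp j) + ρ (n + 1) j (xp j)) / 2)
                * ((v n j (xp j) + v (n + 1) j (xp j)) / 2))) :
    ∀ n ≤ N,
      (∑ i ∈ Finset.range M, ∫ y in xp i..xp (i + 1), ρ n i y)
        = ∑ i ∈ Finset.range M, ∫ y in xp i..xp (i + 1), ρ 0 i y :=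
  dg_fully_discrete_mass_conservation_general M hM xp hx0 hxM N k hk ρ v hρ hv hbv hDG
end
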